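/- arXiv:2410.20169 — 6 statements merged into one kernel-verified Lean document; each statement's English description precedes it below -/
import Mathlib

section
/- Fix θ₀ ∈ ℝ. The log-likelihood ratio λ_{θ₀}(y) = ℓ(y) − ℓ_{θ₀}(y) is a strictly convex function of y ∈ ℝ. Moreover, if θ₀ lies in the range of the posterior mean map θ̂, then λ_{θ₀} attains its minimum over ℝ at a unique point, namely the unique y₀ ∈ ℝ with θ̂(y₀) = θ₀. -/
open MeasureTheory Real Set Filter ProbabilityTheory

/-- Gaussian density with mean `θ` and standard deviation `σ`. -/
noncomputable def gaussPdf (σ θ y : ℝ) : ℝ :=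
  (Real.sqrt (2 * Real.pi * σ ^ 2))⁻¹ * Real.exp (-(y - θ) ^ 2 / (2 * σ ^ 2))

/-- Marginal likelihood `f(y) = ∫ f_θ(y) π(dθ)` under the prior `P`. -/
noncomputable def marginal (σ : ℝ) (P : Measure ℝ) (y : ℝ) : ℝ :=
  ∫ θ, gaussPdf σ θ y ∂P

/-- Posterior mean `θ̂(y) = ∫ θ f_θ(y) π(dθ) / f(y)`. -/
noncomputable def postMean (σ : ℝ) (P : Measure ℝ) (y : ℝ) : ℝ :=
  (∫ θ, θ * gaussPdf σ θ y ∂P) / marginal σ P y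

/-- Log-likelihood ratio `λ_{θ₀}(y) = log f(y) − log f_{θ₀}(y)`. -/
noncomputable def loglr (σ : ℝ) (P : Measure ℝ) (θ₀ y : ℝ) : ℝ :=
  Real.log (marginal σ P y) - Real.log (gaussPdf σ θ₀ y)


/-! ### Auxiliary definitions: `Nf u = ∫ exp (uθ - θ²/(2σ²)) dP` and its first two
"derivative" integrals. -/

noncomputable def Nf (σ : ℝ) (P : Measure ℝ) (u : ℝ) : ℝ :=
  ∫ θ, Real.exp (u * θ - θ ^ 2 / (2 * σ ^ 2)) ∂P

noncomputable def N1 (σ : ℝ) (P : Measure ℝ) (u : ℝ) : ℝ :=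
  ∫ θ, θ * Real.exp (u * θ - θ ^ 2 / (2 * σ ^ 2)) ∂P

noncomputable def N2 (σ : ℝ) (P : Measure ℝ) (u : ℝ) : ℝ :=
  ∫ θ, θ ^ 2 * Real.exp (u * θ - θ ^ 2 / (2 * σ ^ 2)) ∂P

noncomputable def lamD (σ : ℝ) (P : Measure ℝ) (θ₀ y : ℝ) : ℝ :=
  (N1 σ P (y / σ ^ 2) / Nf σ P (y / σ ^ 2) - θ₀) / σ ^ 2

noncomputable def lamD2 (σ : ℝ) (P : Measure ℝ) (y : ℝ) : ℝ :=
  (N2 σ P (y / σ ^ 2) * Nf σ P (y / σ ^ 2) - N1 σ P (y / σ ^ 2) ^ 2)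
    / Nf σ P (y / σ ^ 2) ^ 2 / σ ^ 2 / σ ^ 2

lemma abs_le_exp (t : ℝ) : |t| ≤ Real.exp t + Real.exp (-t) := by
  rcases le_or_gt 0 t with h | h
  · rw [abs_of_nonneg h]
    have := Real.add_one_le_exp t
    have := (Real.exp_pos (-t)).le
    linarith
  · rw [abs_of_neg h]
    have := Real.add_one_le_exp (-t)
    have := (Real.exp_pos t).le
    linarith

lemma sq_le_exp (t : ℝ) : t ^ 2 ≤ Real.exp (2 * t) + Real.exp (-(2 * t)) := by
  have h0 : |t| + 1 ≤ Real.exp |t| := Real.add_one_le_exp |t|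
  have h1 : t ^ 2 ≤ Real.exp |t| ^ 2 := by nlinarith [abs_nonneg t, sq_abs t]
  have h2 : Real.exp |t| ^ 2 = Real.exp (2 * |t|) := by
    rw [sq, ← Real.exp_add]; ring_nf
  rw [h2] at h1
  rcases le_or_gt 0 t with h | h
  · rw [abs_of_nonneg h] at h1
    have := (Real.exp_pos (-(2 * t))).le
    linarith
  · rw [abs_of_neg h, mul_neg] at h1
    have := (Real.exp_pos (2 * t)).le
    linarith

lemma exp_lin_le {u u₀ θ : ℝ} (h : |u - u₀| ≤ 1) :
    Real.exp (u * θ) ≤ Real.exp ((u₀ + 1) * θ) + Real.exp ((u₀ - 1) * θ) := by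
  rcases abs_le.1 h with ⟨h1, h2⟩
  rcases le_or_gt 0 θ with hθ | hθ
  · have : u * θ ≤ (u₀ + 1) * θ := mul_le_mul_of_nonneg_right (by linarith) hθ
    exact le_add_of_le_of_nonneg (Real.exp_le_exp.2 this) (Real.exp_pos _).le
  · have : u * θ ≤ (u₀ - 1) * θ := mul_le_mul_of_nonpos_right (by linarith) hθ.le
    exact le_add_of_nonneg_of_le (Real.exp_pos _).le (Real.exp_le_exp.2 this)

section
variable {σ : ℝ} {P : Measure ℝ}

lemma gauss_eq (hσ : 0 < σ) (θ y : ℝ) :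
    gaussPdf σ θ y = (Real.sqrt (2 * Real.pi * σ ^ 2))⁻¹ * Real.exp (-y ^ 2 / (2 * σ ^ 2))
      * Real.exp ((y / σ ^ 2) * θ - θ ^ 2 / (2 * σ ^ 2)) := by
  unfold gaussPdf
  rw [mul_assoc ((Real.sqrt (2 * Real.pi * σ ^ 2))⁻¹), ← Real.exp_add]
  congr 2
  have hs : (σ:ℝ) ^ 2 ≠ 0 := by positivity
  field_simp
  ring

lemma exp_int (hσ : 0 < σ) (hint : ∀ y : ℝ, Integrable (fun θ => gaussPdf σ θ y) P) (a : ℝ) :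
    Integrable (fun θ => Real.exp (a * θ - θ ^ 2 / (2 * σ ^ 2))) P := by
  have h1 : (0:ℝ) < Real.sqrt (2 * Real.pi * σ ^ 2) := by
    have h : (0:ℝ) < 2 * Real.pi * σ ^ 2 := by positivity
    exact Real.sqrt_pos.2 h
  have h := ((hint (a * σ ^ 2)).const_mul
    (Real.sqrt (2 * Real.pi * σ ^ 2) * Real.exp ((a * σ ^ 2) ^ 2 / (2 * σ ^ 2))))
  refine h.congr (Eventually.of_forall fun θ => ?_)
  simp only
  unfold gaussPdf
  rw [mul_mul_mul_comm, mul_inv_cancel₀ h1.ne', one_mul, ← Real.exp_add]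
  congr 1
  have hs : (σ:ℝ) ^ 2 ≠ 0 := by positivity
  field_simp
  ring

lemma exp_comb (σ a b θ : ℝ) :
    Real.exp (a * θ) * Real.exp (b * θ - θ ^ 2 / (2 * σ ^ 2))
      = Real.exp ((a + b) * θ - θ ^ 2 / (2 * σ ^ 2)) := by
  rw [← Real.exp_add]; ring_nf

lemma bound_int (hσ : 0 < σ) (hint : ∀ y : ℝ, Integrable (fun θ => gaussPdf σ θ y) P)
    (a b c d : ℝ) :
    Integrable (fun θ => (Real.exp (a * θ) + Real.exp (b * θ)) *
      (Real.exp (c * θ - θ ^ 2 / (2 * σ ^ 2)) + Real.exp (d * θ - θ ^ 2 / (2 * σ ^ 2)))) P := by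
  have h : ∀ θ : ℝ, (Real.exp (a * θ) + Real.exp (b * θ)) *
      (Real.exp (c * θ - θ ^ 2 / (2 * σ ^ 2)) + Real.exp (d * θ - θ ^ 2 / (2 * σ ^ 2)))
      = Real.exp ((a + c) * θ - θ ^ 2 / (2 * σ ^ 2)) + Real.exp ((a + d) * θ - θ ^ 2 / (2 * σ ^ 2))
      + (Real.exp ((b + c) * θ - θ ^ 2 / (2 * σ ^ 2)) + Real.exp ((b + d) * θ - θ ^ 2 / (2 * σ ^ 2))) := by
    intro θ
    rw [← exp_comb σ a c, ← exp_comb σ a d, ← exp_comb σ b c, ← exp_comb σ b d]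
    ring
  simp only [h]
  exact (((exp_int hσ hint (a + c)).add (exp_int hσ hint (a + d))).add
    ((exp_int hσ hint (b + c)).add (exp_int hσ hint (b + d))))

lemma bound1 {u u₀ : ℝ} (h : |u - u₀| ≤ 1) (θ : ℝ) :
    ‖θ * Real.exp (u * θ - θ ^ 2 / (2 * σ ^ 2))‖ ≤
      (Real.exp (1 * θ) + Real.exp ((-1) * θ)) *
      (Real.exp ((u₀ + 1) * θ - θ ^ 2 / (2 * σ ^ 2))
        + Real.exp ((u₀ - 1) * θ - θ ^ 2 / (2 * σ ^ 2))) := by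
  have key : Real.exp (u * θ - θ ^ 2 / (2 * σ ^ 2))
      = Real.exp (u * θ) * Real.exp (-(θ ^ 2 / (2 * σ ^ 2))) := by
    rw [← Real.exp_add]; ring_nf
  have key2 : ∀ a : ℝ, Real.exp (a * θ - θ ^ 2 / (2 * σ ^ 2))
      = Real.exp (a * θ) * Real.exp (-(θ ^ 2 / (2 * σ ^ 2))) := fun a => by
    rw [← Real.exp_add]; ring_nf
  rw [norm_mul, Real.norm_eq_abs, Real.norm_eq_abs, Real.abs_exp, key, key2, key2, ← add_mul,
    ← mul_assoc]
  have h1 : |θ| * Real.exp (u * θ) ≤ (Real.exp (1 * θ) + Real.exp ((-1) * θ)) *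
      (Real.exp ((u₀ + 1) * θ) + Real.exp ((u₀ - 1) * θ)) := by
    have := abs_le_exp θ
    have := exp_lin_le (θ := θ) h
    have := (Real.exp_pos (u * θ)).le
    have := abs_nonneg θ
    apply mul_le_mul <;> simp_all <;> positivity
  simpa [mul_assoc] using mul_le_mul_of_nonneg_right h1 (Real.exp_pos (-(θ ^ 2 / (2 * σ ^ 2)))).le

lemma bound2 {u u₀ : ℝ} (h : |u - u₀| ≤ 1) (θ : ℝ) :
    ‖θ ^ 2 * Real.exp (u * θ - θ ^ 2 / (2 * σ ^ 2))‖ ≤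
      (Real.exp (2 * θ) + Real.exp ((-2) * θ)) *
      (Real.exp ((u₀ + 1) * θ - θ ^ 2 / (2 * σ ^ 2))
        + Real.exp ((u₀ - 1) * θ - θ ^ 2 / (2 * σ ^ 2))) := by
  have key2 : ∀ a : ℝ, Real.exp (a * θ - θ ^ 2 / (2 * σ ^ 2))
      = Real.exp (a * θ) * Real.exp (-(θ ^ 2 / (2 * σ ^ 2))) := fun a => by
    rw [← Real.exp_add]; ring_nf
  rw [norm_mul, Real.norm_eq_abs, Real.norm_eq_abs, Real.abs_exp, key2, key2, key2, ← add_mul,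
    ← mul_assoc]
  have h1 : |θ ^ 2| * Real.exp (u * θ) ≤ (Real.exp (2 * θ) + Real.exp ((-2) * θ)) *
      (Real.exp ((u₀ + 1) * θ) + Real.exp ((u₀ - 1) * θ)) := by
    have h2 := sq_le_exp θ
    have h3 := exp_lin_le (θ := θ) h
    have := (Real.exp_pos (u * θ)).le
    rw [abs_of_nonneg (sq_nonneg θ)]
    have hle : Real.exp ((-2) * θ) = Real.exp (-(2 * θ)) := by ring_nf
    rw [hle]
    apply mul_le_mul h2 h3 (Real.exp_pos _).le
    positivity
  simpa [mul_assoc] using mul_le_mul_of_nonneg_right h1 (Real.exp_pos (-(θ ^ 2 / (2 * σ ^ 2)))).le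

lemma Nf_hasDeriv (hσ : 0 < σ) (hint : ∀ y : ℝ, Integrable (fun θ => gaussPdf σ θ y) P)
    (u : ℝ) :
    Integrable (fun θ => θ * Real.exp (u * θ - θ ^ 2 / (2 * σ ^ 2))) P ∧
      HasDerivAt (Nf σ P) (N1 σ P u) u := by
  have h := hasDerivAt_integral_of_dominated_loc_of_deriv_le (μ := P)
    (F := fun x θ => Real.exp (x * θ - θ ^ 2 / (2 * σ ^ 2)))
    (F' := fun x θ => θ * Real.exp (x * θ - θ ^ 2 / (2 * σ ^ 2)))
    (x₀ := u)
    (bound := fun θ => (Real.exp (1 * θ) + Real.exp ((-1) * θ)) *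
      (Real.exp ((u + 1) * θ - θ ^ 2 / (2 * σ ^ 2))
        + Real.exp ((u - 1) * θ - θ ^ 2 / (2 * σ ^ 2))))
    (Metric.ball_mem_nhds u one_pos)
    (Eventually.of_forall fun x => (Continuous.aestronglyMeasurable (by fun_prop)))
    (exp_int hσ hint u)
    (Continuous.aestronglyMeasurable (by fun_prop))
    (Eventually.of_forall fun θ => fun x hx => by
      have : |x - u| ≤ 1 := le_of_lt (by simpa [Real.dist_eq] using hx)
      exact bound1 this θ)
    (bound_int hσ hint 1 (-1) (u + 1) (u - 1))
    (Eventually.of_forall fun θ => fun x _ => by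
      have h1 : HasDerivAt (fun x : ℝ => x * θ - θ ^ 2 / (2 * σ ^ 2)) θ x :=
        ((hasDerivAt_id x).mul_const θ).sub_const _ |>.congr_deriv (one_mul θ)
      simpa [mul_comm] using h1.exp)
  exact ⟨h.1, h.2⟩

lemma N1_hasDeriv (hσ : 0 < σ) (hint : ∀ y : ℝ, Integrable (fun θ => gaussPdf σ θ y) P)
    (u : ℝ) :
    Integrable (fun θ => θ ^ 2 * Real.exp (u * θ - θ ^ 2 / (2 * σ ^ 2))) P ∧
      HasDerivAt (N1 σ P) (N2 σ P u) u := by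
  have h := hasDerivAt_integral_of_dominated_loc_of_deriv_le (μ := P)
    (F := fun x θ => θ * Real.exp (x * θ - θ ^ 2 / (2 * σ ^ 2)))
    (F' := fun x θ => θ ^ 2 * Real.exp (x * θ - θ ^ 2 / (2 * σ ^ 2)))
    (x₀ := u)
    (bound := fun θ => (Real.exp (2 * θ) + Real.exp ((-2) * θ)) *
      (Real.exp ((u + 1) * θ - θ ^ 2 / (2 * σ ^ 2))
        + Real.exp ((u - 1) * θ - θ ^ 2 / (2 * σ ^ 2))))
    (Metric.ball_mem_nhds u one_pos)
    (Eventually.of_forall fun x => (Continuous.aestronglyMeasurable (by fun_prop)))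
    (Nf_hasDeriv hσ hint u).1
    (Continuous.aestronglyMeasurable (by fun_prop))
    (Eventually.of_forall fun θ => fun x hx => by
      have : |x - u| ≤ 1 := le_of_lt (by simpa [Real.dist_eq] using hx)
      exact bound2 this θ)
    (bound_int hσ hint 2 (-2) (u + 1) (u - 1))
    (Eventually.of_forall fun θ => fun x _ => by
      have h1 : HasDerivAt (fun x : ℝ => x * θ - θ ^ 2 / (2 * σ ^ 2)) θ x :=
        ((hasDerivAt_id x).mul_const θ).sub_const _ |>.congr_deriv (one_mul θ)
      have h2 := (h1.exp).const_mul θ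
      refine h2.congr_deriv ?_
      ring)
  exact ⟨h.1, h.2⟩

lemma marginal_eq (hσ : 0 < σ) (y : ℝ) :
    marginal σ P y = (Real.sqrt (2 * Real.pi * σ ^ 2))⁻¹ * Real.exp (-y ^ 2 / (2 * σ ^ 2))
      * Nf σ P (y / σ ^ 2) := by
  unfold marginal Nf
  simp_rw [gauss_eq hσ]
  rw [integral_const_mul]

lemma intnum_eq (hσ : 0 < σ) (y : ℝ) :
    (∫ θ, θ * gaussPdf σ θ y ∂P)
      = (Real.sqrt (2 * Real.pi * σ ^ 2))⁻¹ * Real.exp (-y ^ 2 / (2 * σ ^ 2))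
      * N1 σ P (y / σ ^ 2) := by
  unfold N1
  have h : ∀ θ : ℝ, θ * gaussPdf σ θ y
      = (Real.sqrt (2 * Real.pi * σ ^ 2))⁻¹ * Real.exp (-y ^ 2 / (2 * σ ^ 2))
        * (θ * Real.exp ((y / σ ^ 2) * θ - θ ^ 2 / (2 * σ ^ 2))) := fun θ => by
    rw [gauss_eq hσ]; ring
  simp_rw [h]
  rw [integral_const_mul]

lemma Nf_pos (hσ : 0 < σ) (hpos : ∀ y : ℝ, 0 < marginal σ P y) (u : ℝ) :
    0 < Nf σ P u := by
  have h := hpos (u * σ ^ 2)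
  rw [marginal_eq hσ] at h
  have hs : (σ:ℝ) ^ 2 ≠ 0 := by positivity
  rw [mul_div_cancel_right₀ u hs] at h
  have hA : (0:ℝ) < (Real.sqrt (2 * Real.pi * σ ^ 2))⁻¹
      * Real.exp (-(u * σ ^ 2) ^ 2 / (2 * σ ^ 2)) := by
    have h2 : (0:ℝ) < 2 * Real.pi * σ ^ 2 := by positivity
    positivity
  rcases mul_pos_iff.1 h with ⟨_, h'⟩ | ⟨h', _⟩
  · exact h'
  · linarith

lemma postMean_eq (hσ : 0 < σ) (hpos : ∀ y : ℝ, 0 < marginal σ P y) (y : ℝ) :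
    postMean σ P y = N1 σ P (y / σ ^ 2) / Nf σ P (y / σ ^ 2) := by
  have hA : (0:ℝ) < (Real.sqrt (2 * Real.pi * σ ^ 2))⁻¹
      * Real.exp (-y ^ 2 / (2 * σ ^ 2)) := by
    have h2 : (0:ℝ) < 2 * Real.pi * σ ^ 2 := by positivity
    positivity
  unfold postMean
  rw [intnum_eq hσ, marginal_eq hσ, mul_div_mul_left _ _ hA.ne']

lemma loglr_eq (hσ : 0 < σ) (hpos : ∀ y : ℝ, 0 < marginal σ P y) (θ₀ y : ℝ) :
    loglr σ P θ₀ y = Real.log (Nf σ P (y / σ ^ 2)) - θ₀ / σ ^ 2 * y + θ₀ ^ 2 / (2 * σ ^ 2) := by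
  have h2 : (0:ℝ) < 2 * Real.pi * σ ^ 2 := by positivity
  have hc : (0:ℝ) < (Real.sqrt (2 * Real.pi * σ ^ 2))⁻¹ := by positivity
  have hN := Nf_pos hσ hpos (y / σ ^ 2)
  unfold loglr gaussPdf
  rw [marginal_eq hσ, Real.log_mul (by positivity) hN.ne', Real.log_mul hc.ne' (Real.exp_pos _).ne',
    Real.log_mul hc.ne' (Real.exp_pos _).ne', Real.log_exp, Real.log_exp]
  have hs : (σ:ℝ) ^ 2 ≠ 0 := by positivity
  field_simp
  ring

lemma var_pos (hσ : 0 < σ) (hnd : ¬ ∃ θ₁ : ℝ, P ({θ₁}ᶜ) = 0)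
    (hint : ∀ y : ℝ, Integrable (fun θ => gaussPdf σ θ y) P)
    (hpos : ∀ y : ℝ, 0 < marginal σ P y) (u : ℝ) :
    N1 σ P u ^ 2 < N2 σ P u * Nf σ P u := by
  set m := N1 σ P u / Nf σ P u with hm
  have hNf := Nf_pos hσ hpos u
  have int1 := (Nf_hasDeriv hσ hint u).1
  have int2 := (N1_hasDeriv hσ hint u).1
  have hIint : Integrable
      (fun θ => (θ - m) ^ 2 * Real.exp (u * θ - θ ^ 2 / (2 * σ ^ 2))) P := by
    have h : (fun θ => (θ - m) ^ 2 * Real.exp (u * θ - θ ^ 2 / (2 * σ ^ 2)))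
        = fun θ => θ ^ 2 * Real.exp (u * θ - θ ^ 2 / (2 * σ ^ 2))
          - (2 * m) * (θ * Real.exp (u * θ - θ ^ 2 / (2 * σ ^ 2)))
          + (m ^ 2) * Real.exp (u * θ - θ ^ 2 / (2 * σ ^ 2)) := by
      funext θ; ring
    rw [h]
    exact (int2.sub (int1.const_mul _)).add ((exp_int hσ hint u).const_mul _)
  have hI_eq : (∫ θ, (θ - m) ^ 2 * Real.exp (u * θ - θ ^ 2 / (2 * σ ^ 2)) ∂P)
      = N2 σ P u - (2 * m) * N1 σ P u + m ^ 2 * Nf σ P u := by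
    have h : (fun θ => (θ - m) ^ 2 * Real.exp (u * θ - θ ^ 2 / (2 * σ ^ 2)))
        = fun θ => θ ^ 2 * Real.exp (u * θ - θ ^ 2 / (2 * σ ^ 2))
          - (2 * m) * (θ * Real.exp (u * θ - θ ^ 2 / (2 * σ ^ 2)))
          + (m ^ 2) * Real.exp (u * θ - θ ^ 2 / (2 * σ ^ 2)) := by
      funext θ; ring
    have hsub : Integrable (fun θ => θ ^ 2 * Real.exp (u * θ - θ ^ 2 / (2 * σ ^ 2))
        - (2 * m) * (θ * Real.exp (u * θ - θ ^ 2 / (2 * σ ^ 2)))) P :=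
      int2.sub (int1.const_mul _)
    have hcm : Integrable (fun θ => (m ^ 2) * Real.exp (u * θ - θ ^ 2 / (2 * σ ^ 2))) P :=
      (exp_int hσ hint u).const_mul _
    have hcm1 : Integrable (fun θ => (2 * m) * (θ * Real.exp (u * θ - θ ^ 2 / (2 * σ ^ 2)))) P :=
      int1.const_mul _
    rw [h, integral_add hsub hcm, integral_sub int2 hcm1,
      integral_const_mul, integral_const_mul]
    rfl
  have hI_pos : 0 < ∫ θ, (θ - m) ^ 2 * Real.exp (u * θ - θ ^ 2 / (2 * σ ^ 2)) ∂P := by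
    refine (integral_pos_iff_support_of_nonneg ?_ hIint).2 ?_
    · intro θ; positivity
    · have hsupp : Function.support
          (fun θ => (θ - m) ^ 2 * Real.exp (u * θ - θ ^ 2 / (2 * σ ^ 2))) = {m}ᶜ := by
        ext θ
        simp only [Function.mem_support, Set.mem_compl_iff, Set.mem_singleton_iff]
        constructor
        · intro h h'
          apply h
          rw [h']; simp
        · intro h
          have : θ - m ≠ 0 := sub_ne_zero.2 h
          positivity
      rw [hsupp]
      rcases eq_or_ne (P ({m}ᶜ)) 0 with h | h
      · exact absurd ⟨m, h⟩ hnd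
      · exact h.bot_lt
  rw [hI_eq] at hI_pos
  have hmN : m * Nf σ P u = N1 σ P u := div_mul_cancel₀ _ hNf.ne'
  nlinarith [mul_pos hI_pos hNf]

lemma ratio_hasDeriv (hσ : 0 < σ)
    (hint : ∀ y : ℝ, Integrable (fun θ => gaussPdf σ θ y) P)
    (hpos : ∀ y : ℝ, 0 < marginal σ P y) (y : ℝ) :
    HasDerivAt (fun y => N1 σ P (y / σ ^ 2) / Nf σ P (y / σ ^ 2))
      ((N2 σ P (y / σ ^ 2) * Nf σ P (y / σ ^ 2) - N1 σ P (y / σ ^ 2) ^ 2)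
        / Nf σ P (y / σ ^ 2) ^ 2 / σ ^ 2) y := by
  have hid : HasDerivAt (fun y : ℝ => y / σ ^ 2) (1 / σ ^ 2) y := by
    simpa using (hasDerivAt_id y).div_const (σ ^ 2)
  have h1 : HasDerivAt (fun y => N1 σ P (y / σ ^ 2)) (N2 σ P (y / σ ^ 2) * (1 / σ ^ 2)) y :=
    HasDerivAt.comp (h₂ := N1 σ P) y ((N1_hasDeriv hσ hint (y / σ ^ 2)).2) hid
  have h2 : HasDerivAt (fun y => Nf σ P (y / σ ^ 2)) (N1 σ P (y / σ ^ 2) * (1 / σ ^ 2)) y :=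
    HasDerivAt.comp (h₂ := Nf σ P) y ((Nf_hasDeriv hσ hint (y / σ ^ 2)).2) hid
  have hNf := Nf_pos hσ hpos (y / σ ^ 2)
  have h := h1.div h2 hNf.ne'
  refine h.congr_deriv ?_
  have hs : (σ:ℝ) ^ 2 ≠ 0 := by positivity
  field_simp

lemma loglr_hasDeriv (hσ : 0 < σ)
    (hint : ∀ y : ℝ, Integrable (fun θ => gaussPdf σ θ y) P)
    (hpos : ∀ y : ℝ, 0 < marginal σ P y) (θ₀ y : ℝ) :
    HasDerivAt (loglr σ P θ₀) (lamD σ P θ₀ y) y := by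
  have hid : HasDerivAt (fun y : ℝ => y / σ ^ 2) (1 / σ ^ 2) y := by
    simpa using (hasDerivAt_id y).div_const (σ ^ 2)
  have h2 : HasDerivAt (fun y => Nf σ P (y / σ ^ 2)) (N1 σ P (y / σ ^ 2) * (1 / σ ^ 2)) y :=
    HasDerivAt.comp (h₂ := Nf σ P) y ((Nf_hasDeriv hσ hint (y / σ ^ 2)).2) hid
  have hNf := Nf_pos hσ hpos (y / σ ^ 2)
  have hlog := h2.log hNf.ne'
  have hlin : HasDerivAt (fun y : ℝ => θ₀ / σ ^ 2 * y) (θ₀ / σ ^ 2) y := by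
    simpa using (hasDerivAt_id y).const_mul (θ₀ / σ ^ 2)
  have h := (hlog.sub hlin).add_const (θ₀ ^ 2 / (2 * σ ^ 2))
  have hfe : (fun y => Real.log (Nf σ P (y / σ ^ 2)) - θ₀ / σ ^ 2 * y + θ₀ ^ 2 / (2 * σ ^ 2))
      = loglr σ P θ₀ := by
    funext z; rw [loglr_eq hσ hpos]
  simp only [Pi.sub_apply] at h
  rw [hfe] at h
  refine h.congr_deriv ?_
  unfold lamD
  have hs : (σ:ℝ) ^ 2 ≠ 0 := by positivity
  field_simp

lemma lamD_hasDeriv (hσ : 0 < σ)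
    (hint : ∀ y : ℝ, Integrable (fun θ => gaussPdf σ θ y) P)
    (hpos : ∀ y : ℝ, 0 < marginal σ P y) (θ₀ y : ℝ) :
    HasDerivAt (lamD σ P θ₀) (lamD2 σ P y) y :=
  ((ratio_hasDeriv hσ hint hpos y).sub_const θ₀).div_const (σ ^ 2)

lemma lamD2_pos (hσ : 0 < σ) (hnd : ¬ ∃ θ₁ : ℝ, P ({θ₁}ᶜ) = 0)
    (hint : ∀ y : ℝ, Integrable (fun θ => gaussPdf σ θ y) P)
    (hpos : ∀ y : ℝ, 0 < marginal σ P y) (y : ℝ) :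
    0 < lamD2 σ P y := by
  have h := var_pos hσ hnd hint hpos (y / σ ^ 2)
  have hNf := Nf_pos hσ hpos (y / σ ^ 2)
  unfold lamD2
  have hs : (0:ℝ) < σ ^ 2 := by positivity
  have : 0 < N2 σ P (y / σ ^ 2) * Nf σ P (y / σ ^ 2) - N1 σ P (y / σ ^ 2) ^ 2 := by linarith
  positivity

end

/-- the log-likelihood ratio is strictly convex in `y`; if `θ₀` is in the range
of the posterior mean map, then there is a unique `y₀` with `θ̂(y₀) = θ₀`, and any such
`y₀` is the unique (strict) global minimizer of `λ_{θ₀}` on `ℝ`. -/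
theorem stmt0 (σ : ℝ) (hσ : 0 < σ) (P : Measure ℝ) [IsLocallyFiniteMeasure P]
    (hnd : ¬ ∃ θ₁ : ℝ, P ({θ₁}ᶜ) = 0)
    (hint : ∀ y : ℝ, Integrable (fun θ => gaussPdf σ θ y) P)
    (hpos : ∀ y : ℝ, 0 < marginal σ P y)
    (θ₀ : ℝ) :
    StrictConvexOn ℝ Set.univ (loglr σ P θ₀) ∧
    (θ₀ ∈ Set.range (postMean σ P) →
      (∃! y₀ : ℝ, postMean σ P y₀ = θ₀) ∧
      ∀ y₀ : ℝ, postMean σ P y₀ = θ₀ →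
        ∀ y : ℝ, y ≠ y₀ → loglr σ P θ₀ y₀ < loglr σ P θ₀ y) := by
  have hd1 : ∀ y, HasDerivAt (loglr σ P θ₀) (lamD σ P θ₀ y) y :=
    loglr_hasDeriv hσ hint hpos θ₀
  have hd2 : ∀ y, HasDerivAt (lamD σ P θ₀) (lamD2 σ P y) y :=
    lamD_hasDeriv hσ hint hpos θ₀
  have hderiv1 : deriv (loglr σ P θ₀) = lamD σ P θ₀ := funext fun y => (hd1 y).deriv
  have hcont : Continuous (loglr σ P θ₀) :=
    continuous_iff_continuousAt.2 fun y => (hd1 y).continuousAt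
  have hmono : StrictMono (lamD σ P θ₀) := by
    apply strictMono_of_deriv_pos
    intro y
    rw [(hd2 y).deriv]
    exact lamD2_pos hσ hnd hint hpos y
  have hconv : StrictConvexOn ℝ Set.univ (loglr σ P θ₀) := by
    apply StrictMono.strictConvexOn_univ_of_deriv hcont
    rw [hderiv1]
    exact hmono
  have hmin : ∀ y₀ : ℝ, postMean σ P y₀ = θ₀ →
      ∀ y : ℝ, y ≠ y₀ → loglr σ P θ₀ y₀ < loglr σ P θ₀ y := by
    intro y₀ h0 y hy
    have hcrit : lamD σ P θ₀ y₀ = 0 := by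
      unfold lamD
      rw [← postMean_eq hσ hpos, h0]
      simp
    rcases lt_or_gt_of_ne hy with h | h
    · obtain ⟨c, hc, hceq⟩ := exists_hasDerivAt_eq_slope (loglr σ P θ₀) (lamD σ P θ₀) h
        hcont.continuousOn (fun x _ => hd1 x)
      have hcneg : lamD σ P θ₀ c < 0 := by
        rw [← hcrit]; exact hmono hc.2
      rw [hceq] at hcneg
      rcases div_neg_iff.1 hcneg with ⟨_, h2⟩ | ⟨h1, _⟩ <;> linarith
    · obtain ⟨c, hc, hceq⟩ := exists_hasDerivAt_eq_slope (loglr σ P θ₀) (lamD σ P θ₀) h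
        hcont.continuousOn (fun x _ => hd1 x)
      have hcpos : 0 < lamD σ P θ₀ c := by
        rw [← hcrit]; exact hmono hc.1
      rw [hceq] at hcpos
      rcases div_pos_iff.1 hcpos with ⟨h1, _⟩ | ⟨_, h2⟩ <;> linarith
  refine ⟨hconv, fun hrange => ?_⟩
  obtain ⟨y₀, hy₀⟩ := hrange
  refine ⟨⟨y₀, hy₀, fun y' hy' => ?_⟩, hmin⟩
  by_contra hne
  exact absurd (hmin y' hy' y₀ (Ne.symm hne)) (not_lt.2 (hmin y₀ hy₀ y' hne).le)
end

section
/- Assume the marginal likelihood satisfies the tail condition f(y) ~ γ|y|^{−δ} exp(−κ|y|/σ) as y → ±∞ for some δ ≥ 0, κ ≥ 0, γ > 0, and that the derivative of y ↦ f(y) exp(κ|y|/σ) (defined on ℝ∖{0}) is monotone on (M, ∞) and on (−∞, −M) for some M > 0. Then for every α ∈ (0,1), the FAB confidence regions are uniformly bounded in volume: sup_{y ∈ ℝ} Leb(C_α(y)) < ∞, where Leb denotes Lebesgue measure. -/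
open MeasureTheory Real Set Filter ProbabilityTheory Topology

/-- `k_α(θ₀)`: the smallest `k` such that `N(θ₀, σ²)` gives mass at least `1 − α` to the
sublevel set `{y : λ_{θ₀}(y) ≤ k}`. -/
noncomputable def kAlpha (σ : ℝ) (P : Measure ℝ) (α θ₀ : ℝ) : ℝ :=
  sInf {k : ℝ | ENNReal.ofReal (1 - α) ≤
    gaussianReal θ₀ ((σ ^ 2).toNNReal) {y | loglr σ P θ₀ y ≤ k}}

/-- Acceptance region `A_α(θ₀) = {y : λ_{θ₀}(y) ≤ k_α(θ₀)}`. -/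
def acceptRegion (σ : ℝ) (P : Measure ℝ) (α θ₀ : ℝ) : Set ℝ :=
  {y | loglr σ P θ₀ y ≤ kAlpha σ P α θ₀}

/-- FAB confidence region `C_α(y) = {θ₀ : y ∈ A_α(θ₀)}`. -/
def confRegion (σ : ℝ) (P : Measure ℝ) (α y : ℝ) : Set ℝ :=
  {θ₀ | y ∈ acceptRegion σ P α θ₀}

lemma fab_loglr_eq (σ : ℝ) (hσ : 0 < σ) (P : Measure ℝ) (θ₀ y : ℝ) :
    loglr σ P θ₀ y = Real.log (marginal σ P y) + Real.log (Real.sqrt (2*Real.pi*σ^2))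
      + (y-θ₀)^2/(2*σ^2) := by
  have hs : 0 < Real.sqrt (2*Real.pi*σ^2) := Real.sqrt_pos.2 (by positivity)
  unfold loglr gaussPdf
  rw [Real.log_mul (by positivity) (Real.exp_ne_zero _), Real.log_inv, Real.log_exp]
  ring

lemma fab_gauss_mono (σ : ℝ) (hσ : 0 < σ) {θ y z : ℝ} (h : (z-θ)^2 ≤ (y-θ)^2) :
    gaussPdf σ θ y ≤ gaussPdf σ θ z := by
  unfold gaussPdf
  have h2 : -(y-θ)^2/(2*σ^2) ≤ -(z-θ)^2/(2*σ^2) :=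
    div_le_div_of_nonneg_right (by linarith) (by positivity) |>.trans_eq rfl
  exact mul_le_mul_of_nonneg_left (Real.exp_le_exp.2 h2) (by positivity)

lemma fab_gauss_twoPoint (σ : ℝ) (hσ : 0 < σ) {u v y θ : ℝ} (huy : u ≤ y) (hyv : y ≤ v) :
    gaussPdf σ θ y ≤ Real.exp ((v-u)^2/(2*σ^2)) * (gaussPdf σ θ u + gaussPdf σ θ v) := by
  have hs : (0:ℝ) < Real.sqrt (2*Real.pi*σ^2) := Real.sqrt_pos.2 (by positivity)
  have hσ2 : (0:ℝ) < 2*σ^2 := by positivity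
  have hec : (1:ℝ) ≤ Real.exp ((v-u)^2/(2*σ^2)) := Real.one_le_exp (by positivity)
  have hgnn : ∀ z : ℝ, 0 ≤ gaussPdf σ θ z := fun z => by unfold gaussPdf; positivity
  rcases le_total θ u with h | h
  · have h1 : gaussPdf σ θ y ≤ gaussPdf σ θ u := fab_gauss_mono σ hσ (by nlinarith)
    nlinarith [hgnn u, hgnn v]
  rcases le_total v θ with h2 | h2
  · have h1 : gaussPdf σ θ y ≤ gaussPdf σ θ v := fab_gauss_mono σ hσ (by nlinarith)
    nlinarith [hgnn u, hgnn v]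
  · -- u ≤ θ ≤ v
    have h1 : gaussPdf σ θ y ≤ (Real.sqrt (2*Real.pi*σ^2))⁻¹ * 1 := by
      unfold gaussPdf
      refine mul_le_mul_of_nonneg_left (Real.exp_le_one_iff.2 ?_) (by positivity)
      exact div_nonpos_of_nonpos_of_nonneg (neg_nonpos.2 (sq_nonneg _)) hσ2.le
    have h3 : ((Real.sqrt (2*Real.pi*σ^2))⁻¹ : ℝ) * 1
        ≤ Real.exp ((v-u)^2/(2*σ^2)) * gaussPdf σ θ u := by
      have he : (1:ℝ) ≤ Real.exp ((v-u)^2/(2*σ^2)) * Real.exp (-(u-θ)^2/(2*σ^2)) := by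
        rw [← Real.exp_add]
        refine Real.one_le_exp ?_
        have h5 : (u-θ)^2 ≤ (v-u)^2 := by nlinarith
        have h4 : (v-u)^2/(2*σ^2) + -(u-θ)^2/(2*σ^2) = ((v-u)^2 - (u-θ)^2)/(2*σ^2) := by ring
        rw [h4]; exact div_nonneg (by linarith) hσ2.le
      show _ ≤ Real.exp ((v-u)^2/(2*σ^2)) * ((Real.sqrt (2*Real.pi*σ^2))⁻¹ * Real.exp (-(u-θ)^2/(2*σ^2)))
      calc (Real.sqrt (2*Real.pi*σ^2))⁻¹ * 1
          ≤ (Real.sqrt (2*Real.pi*σ^2))⁻¹ * (Real.exp ((v-u)^2/(2*σ^2)) * Real.exp (-(u-θ)^2/(2*σ^2))) :=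
            mul_le_mul_of_nonneg_left he (by positivity)
        _ = Real.exp ((v-u)^2/(2*σ^2)) * ((Real.sqrt (2*Real.pi*σ^2))⁻¹ * Real.exp (-(u-θ)^2/(2*σ^2))) := by ring
    calc gaussPdf σ θ y ≤ (Real.sqrt (2*Real.pi*σ^2))⁻¹ * 1 := h1
      _ ≤ Real.exp ((v-u)^2/(2*σ^2)) * gaussPdf σ θ u := h3
      _ ≤ Real.exp ((v-u)^2/(2*σ^2)) * (gaussPdf σ θ u + gaussPdf σ θ v) := by
          nlinarith [hgnn u, hgnn v]

lemma fab_marginal_twoPoint (σ : ℝ) (hσ : 0 < σ) (P : Measure ℝ)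
    (hint : ∀ y : ℝ, Integrable (fun θ => gaussPdf σ θ y) P)
    {u v y : ℝ} (huy : u ≤ y) (hyv : y ≤ v) :
    marginal σ P y ≤ Real.exp ((v-u)^2/(2*σ^2)) * (marginal σ P u + marginal σ P v) := by
  have h1 : marginal σ P y ≤ ∫ θ, Real.exp ((v-u)^2/(2*σ^2)) * (gaussPdf σ θ u + gaussPdf σ θ v) ∂P :=
    integral_mono (hint y) (((hint u).add (hint v)).const_mul _)
      (fun θ => fab_gauss_twoPoint σ hσ huy hyv)
  calc marginal σ P y ≤ _ := h1
    _ = Real.exp ((v-u)^2/(2*σ^2)) * (marginal σ P u + marginal σ P v) := by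
        rw [integral_const_mul, integral_add (hint u) (hint v)]; rfl

/-- the comparison weight function -/
noncomputable def fabPsi (δ κ σ x : ℝ) : ℝ := (1+|x|) ^ (-δ) * Real.exp (-(κ/σ) * |x|)

lemma fabPsi_pos {δ κ σ : ℝ} (x : ℝ) : 0 < fabPsi δ κ σ x := by
  unfold fabPsi
  have : (0:ℝ) < 1 + |x| := by positivity
  positivity

lemma fabPsi_le_one {δ κ σ : ℝ} (hδ : 0 ≤ δ) (hκσ : 0 ≤ κ/σ) (x : ℝ) : fabPsi δ κ σ x ≤ 1 := by
  unfold fabPsi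
  have h1 : (1+|x|) ^ (-δ) ≤ 1 := by
    refine Real.rpow_le_one_of_one_le_of_nonpos (by simp [abs_nonneg]) (by linarith)
  have h2 : Real.exp (-(κ/σ) * |x|) ≤ 1 := Real.exp_le_one_iff.2 (by
    have := abs_nonneg x; nlinarith)
  nlinarith [Real.exp_pos (-(κ/σ) * |x|), Real.rpow_nonneg (by positivity : (0:ℝ) ≤ 1+|x|) (-δ)]

/-- slow variation: ψ x ≤ (1+t)^δ e^{(κ/σ)t} ψ x' when |x - x'| ≤ t -/
lemma fabPsi_slowVar {δ κ σ : ℝ} (hδ : 0 ≤ δ) (hκσ : 0 ≤ κ/σ) {x x' t : ℝ}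
    (h : |x - x'| ≤ t) :
    fabPsi δ κ σ x ≤ (1+t) ^ δ * Real.exp ((κ/σ) * t) * fabPsi δ κ σ x' := by
  have ht : 0 ≤ t := le_trans (abs_nonneg _) h
  have hb : (0:ℝ) < 1 + |x| := by positivity
  have hb' : (0:ℝ) < 1 + |x'| := by positivity
  have ht1 : (0:ℝ) < 1 + t := by linarith
  have habs : |x'| ≤ |x| + t := by
    have h1 := abs_sub_abs_le_abs_sub x' x
    have h2 : |x' - x| ≤ t := by rwa [abs_sub_comm]
    linarith
  -- power part : (1+|x|)^(-δ) ≤ (1+t)^δ * (1+|x'|)^(-δ)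
  have hpow : (1+|x|) ^ (-δ) ≤ (1+t) ^ δ * (1+|x'|) ^ (-δ) := by
    have hc : 1 + |x'| ≤ (1+|x|) * (1+t) := by nlinarith [abs_nonneg x]
    have h2 : (1+|x'|) ^ δ ≤ ((1+|x|) * (1+t)) ^ δ := Real.rpow_le_rpow hb'.le hc hδ
    rw [Real.mul_rpow hb.le ht1.le] at h2
    have hbp : (0:ℝ) < (1+|x|) ^ δ := Real.rpow_pos_of_pos hb δ
    have hb'p : (0:ℝ) < (1+|x'|) ^ δ := Real.rpow_pos_of_pos hb' δ
    rw [Real.rpow_neg hb.le, Real.rpow_neg hb'.le, ← div_eq_mul_inv, le_div_iff₀ hb'p,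
      inv_mul_le_iff₀ hbp]
    linarith
  have hexp : Real.exp (-(κ/σ) * |x|) ≤ Real.exp ((κ/σ) * t) * Real.exp (-(κ/σ) * |x'|) := by
    rw [← Real.exp_add, Real.exp_le_exp]
    nlinarith [mul_le_mul_of_nonneg_left (by linarith : |x'| - |x| ≤ t) hκσ]
  calc fabPsi δ κ σ x = (1+|x|) ^ (-δ) * Real.exp (-(κ/σ) * |x|) := rfl
    _ ≤ ((1+t) ^ δ * (1+|x'|) ^ (-δ)) * (Real.exp ((κ/σ) * t) * Real.exp (-(κ/σ) * |x'|)) := by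
        refine mul_le_mul hpow hexp (Real.exp_pos _).le ?_
        positivity
    _ = (1+t) ^ δ * Real.exp ((κ/σ) * t) * fabPsi δ κ σ x' := by
        unfold fabPsi; ring

lemma fabPsi_anti {δ κ σ : ℝ} (hδ : 0 ≤ δ) (hκσ : 0 ≤ κ/σ) {a b : ℝ} (h : |a| ≤ |b|) :
    fabPsi δ κ σ b ≤ fabPsi δ κ σ a := by
  unfold fabPsi
  have h1 : (1+|b|) ^ (-δ) ≤ (1+|a|) ^ (-δ) :=
    Real.rpow_le_rpow_of_nonpos (by positivity) (by linarith) (by linarith)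
  have h2 : Real.exp (-(κ/σ) * |b|) ≤ Real.exp (-(κ/σ) * |a|) := by
    rw [Real.exp_le_exp]; nlinarith
  exact mul_le_mul h1 h2 (Real.exp_pos _).le (by positivity)

/-- global two-sided comparison of the marginal with fabPsi -/
lemma fab_global_bounds (σ : ℝ) (hσ : 0 < σ) (P : Measure ℝ) [IsLocallyFiniteMeasure P]
    (hnd : ¬ ∃ θ₁ : ℝ, P ({θ₁}ᶜ) = 0)
    (hint : ∀ y : ℝ, Integrable (fun θ => gaussPdf σ θ y) P)
    (hpos : ∀ y : ℝ, 0 < marginal σ P y)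
    (γ δ κ : ℝ) (hγ : 0 < γ) (hδ : 0 ≤ δ) (hκ : 0 ≤ κ)
    (htailTop : Tendsto
      (fun y => marginal σ P y / (γ * |y| ^ (-δ) * Real.exp (-(κ / σ) * |y|)))
      atTop (𝓝 1))
    (htailBot : Tendsto
      (fun y => marginal σ P y / (γ * |y| ^ (-δ) * Real.exp (-(κ / σ) * |y|)))
      atBot (𝓝 1)) :
    ∃ c₁ c₂ : ℝ, 0 < c₁ ∧ 0 < c₂ ∧ ∀ y : ℝ,
      c₁ * fabPsi δ κ σ y ≤ marginal σ P y ∧ marginal σ P y ≤ c₂ * fabPsi δ κ σ y := by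
  have hκσ : 0 ≤ κ/σ := div_nonneg hκ hσ.le
  set m : ℝ → ℝ := fun y => γ * |y| ^ (-δ) * Real.exp (-(κ / σ) * |y|) with hm
  -- step (a): tail bounds
  have hmem : Ioo (1/2 : ℝ) 2 ∈ 𝓝 (1:ℝ) := Ioo_mem_nhds (by norm_num) (by norm_num)
  obtain ⟨Y₁, hY₁⟩ := (htailTop.eventually hmem).exists_forall_of_atTop
  obtain ⟨Y₂, hY₂⟩ := (htailBot.eventually hmem).exists_forall_of_atBot
  set Y : ℝ := max 1 (max Y₁ (-Y₂)) with hYdef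
  have hY1 : (1:ℝ) ≤ Y := le_max_left _ _
  have htail : ∀ y : ℝ, Y ≤ |y| → m y / 2 ≤ marginal σ P y ∧ marginal σ P y ≤ 2 * m y := by
    intro y hy
    have hmpos : 0 < m y := by
      have : (0:ℝ) < |y| := by
        have := le_trans hY1 hy; linarith
      have : (0:ℝ) < |y| ^ (-δ) := Real.rpow_pos_of_pos this _
      rw [hm]; positivity
    have hratio : 1/2 < marginal σ P y / m y ∧ marginal σ P y / m y < 2 := by
      rcases le_or_gt 0 y with h0 | h0
      · refine hY₁ y ?_
        have habs : |y| = y := abs_of_nonneg h0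
        have h2 : Y₁ ≤ Y := le_trans (le_max_left Y₁ (-Y₂)) (le_max_right 1 _)
        linarith
      · refine hY₂ y ?_
        have habs : |y| = -y := abs_of_neg h0
        have h2 : -Y₂ ≤ Y := le_trans (le_max_right Y₁ (-Y₂)) (le_max_right 1 _)
        linarith
    obtain ⟨hlo, hhi⟩ := hratio
    rw [div_lt_iff₀ hmpos] at hhi
    rw [lt_div_iff₀ hmpos] at hlo
    constructor <;> linarith
  -- step (b): m vs psi on |y| ≥ 1
  have hb_lo : ∀ y : ℝ, 1 ≤ |y| → γ * fabPsi δ κ σ y ≤ m y := by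
    intro y hy
    have h0 : (0:ℝ) < |y| := by linarith
    have h1 : (1+|y|) ^ (-δ) ≤ |y| ^ (-δ) :=
      Real.rpow_le_rpow_of_nonpos h0 (by linarith) (by linarith)
    unfold fabPsi
    rw [show m y = γ * |y| ^ (-δ) * Real.exp (-(κ/σ) * |y|) from rfl]
    have he : (0:ℝ) < Real.exp (-(κ/σ) * |y|) := Real.exp_pos _
    nlinarith [mul_le_mul_of_nonneg_left (mul_le_mul_of_nonneg_right h1 he.le) hγ.le]
  have hb_hi : ∀ y : ℝ, 1 ≤ |y| → m y ≤ γ * (2:ℝ) ^ δ * fabPsi δ κ σ y := by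
    intro y hy
    have h0 : (0:ℝ) < |y| := by linarith
    have hhalf : (0:ℝ) < (1+|y|)/2 := by positivity
    have h1 : |y| ^ (-δ) ≤ ((1+|y|)/2) ^ (-δ) :=
      Real.rpow_le_rpow_of_nonpos hhalf (by linarith) (by linarith)
    have h2 : ((1+|y|)/2 : ℝ) ^ (-δ) = (2:ℝ) ^ δ * (1+|y|) ^ (-δ) := by
      rw [Real.div_rpow (by positivity) (by norm_num), Real.rpow_neg (by norm_num : (0:ℝ) ≤ 2)]
      field_simp
    rw [h2] at h1
    unfold fabPsi
    rw [show m y = γ * |y| ^ (-δ) * Real.exp (-(κ/σ) * |y|) from rfl]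
    have he : (0:ℝ) < Real.exp (-(κ/σ) * |y|) := Real.exp_pos _
    nlinarith [mul_le_mul_of_nonneg_left (mul_le_mul_of_nonneg_right h1 he.le) hγ.le]
  -- step (c): compact positive lower bound
  have hPne : P ≠ 0 := by
    intro h0
    exact hnd ⟨0, by simp [h0]⟩
  obtain ⟨n, hn⟩ : ∃ n : ℕ, 0 < P (Icc (-(n:ℝ)) n) := by
    by_contra hcon
    push_neg at hcon
    have hz : ∀ n : ℕ, P (Icc (-(n:ℝ)) n) = 0 := fun n => le_antisymm (hcon n) (zero_le)
    have huniv : P univ = 0 := by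
      have hsub : (univ : Set ℝ) ⊆ ⋃ n : ℕ, Icc (-(n:ℝ)) n := by
        intro x _
        obtain ⟨k, hk⟩ := exists_nat_ge |x|
        refine mem_iUnion.2 ⟨k, ?_⟩
        constructor
        · linarith [neg_abs_le x]
        · linarith [le_abs_self x]
      exact measure_mono_null hsub (measure_iUnion_null hz)
    exact hPne (Measure.measure_univ_eq_zero.1 huniv)
  have hPfin : P (Icc (-(n:ℝ)) n) < ⊤ := isCompact_Icc.measure_lt_top
  set d : ℝ := (Real.sqrt (2*Real.pi*σ^2))⁻¹ * Real.exp (-(Y+n)^2/(2*σ^2)) with hd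
  have hdpos : 0 < d := by
    rw [hd]
    have : (0:ℝ) < Real.sqrt (2*Real.pi*σ^2) := Real.sqrt_pos.2 (by positivity)
    positivity
  set c₀ : ℝ := d * (P (Icc (-(n:ℝ)) n)).toReal with hc₀
  have hc₀pos : 0 < c₀ := by
    rw [hc₀]
    exact mul_pos hdpos (ENNReal.toReal_pos hn.ne' hPfin.ne)
  have hcompact_lo : ∀ y : ℝ, |y| ≤ Y → c₀ ≤ marginal σ P y := by
    intro y hy
    have hnonneg : ∀ θ : ℝ, 0 ≤ gaussPdf σ θ y := fun θ => by
      unfold gaussPdf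
      have : (0:ℝ) < Real.sqrt (2*Real.pi*σ^2) := Real.sqrt_pos.2 (by positivity)
      positivity
    have h1 : ∫ θ in Icc (-(n:ℝ)) n, gaussPdf σ θ y ∂P ≤ marginal σ P y :=
      setIntegral_le_integral (hint y) (ae_of_all _ hnonneg)
    have h2 : ∀ θ ∈ Icc (-(n:ℝ)) n, d ≤ gaussPdf σ θ y := by
      intro θ hθ
      obtain ⟨hθ1, hθ2⟩ := hθ
      have habs : (y-θ)^2 ≤ (Y+n)^2 := by
        have h3 := neg_abs_le y
        have h4 := le_abs_self y
        nlinarith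
      rw [hd]
      unfold gaussPdf
      refine mul_le_mul_of_nonneg_left (Real.exp_le_exp.2 ?_) ?_
      · exact div_le_div_of_nonneg_right (by linarith) (by positivity)
      · have : (0:ℝ) < Real.sqrt (2*Real.pi*σ^2) := Real.sqrt_pos.2 (by positivity)
        positivity
    have h3 : ∫ θ in Icc (-(n:ℝ)) n, (fun _ => d) θ ∂P ≤ ∫ θ in Icc (-(n:ℝ)) n, gaussPdf σ θ y ∂P := by
      refine setIntegral_mono_on ?_ ?_ measurableSet_Icc h2
      · exact integrableOn_const hPfin.ne
      · exact (hint y).integrableOn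
    have h4 : ∫ θ in Icc (-(n:ℝ)) n, (fun _ => d) θ ∂P = (P (Icc (-(n:ℝ)) n)).toReal * d := by
      rw [setIntegral_const]
      simp [smul_eq_mul, Measure.real]
    rw [h4] at h3
    calc c₀ = (P (Icc (-(n:ℝ)) n)).toReal * d := by rw [hc₀]; ring
      _ ≤ ∫ θ in Icc (-(n:ℝ)) n, gaussPdf σ θ y ∂P := h3
      _ ≤ marginal σ P y := h1
  -- step (d): compact upper bound
  set Bf : ℝ := Real.exp ((Y-(-Y))^2/(2*σ^2)) * (marginal σ P (-Y) + marginal σ P Y) with hBf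
  have hBfpos : 0 < Bf := by
    rw [hBf]
    have := hpos (-Y); have := hpos Y
    positivity
  have hcompact_hi : ∀ y : ℝ, |y| ≤ Y → marginal σ P y ≤ Bf := by
    intro y hy
    exact fab_marginal_twoPoint σ hσ P hint (by linarith [neg_abs_le y]) (by linarith [le_abs_self y])
  -- assemble
  set ψY : ℝ := fabPsi δ κ σ Y with hψY
  have hψYpos : 0 < ψY := fabPsi_pos Y
  refine ⟨min (γ/2) c₀, max (2*(γ*(2:ℝ)^δ)) (Bf / ψY), lt_min (by positivity) hc₀pos, ?_, ?_⟩
  · exact lt_max_iff.2 (Or.inl (by positivity))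
  intro y
  have hψpos : 0 < fabPsi δ κ σ y := fabPsi_pos y
  have hψ1 : fabPsi δ κ σ y ≤ 1 := fabPsi_le_one hδ hκσ y
  rcases le_or_gt Y |y| with hy | hy
  · obtain ⟨hlo, hhi⟩ := htail y hy
    have h1 : 1 ≤ |y| := le_trans hY1 hy
    constructor
    · calc min (γ/2) c₀ * fabPsi δ κ σ y ≤ (γ/2) * fabPsi δ κ σ y := by
            exact mul_le_mul_of_nonneg_right (min_le_left _ _) hψpos.le
        _ ≤ m y / 2 := by linarith [hb_lo y h1]
        _ ≤ marginal σ P y := hlo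
    · calc marginal σ P y ≤ 2 * m y := hhi
        _ ≤ 2*(γ*(2:ℝ)^δ) * fabPsi δ κ σ y := by linarith [hb_hi y h1]
        _ ≤ max (2*(γ*(2:ℝ)^δ)) (Bf / ψY) * fabPsi δ κ σ y :=
            mul_le_mul_of_nonneg_right (le_max_left _ _) hψpos.le
  · have hyY : |y| ≤ Y := hy.le
    constructor
    · calc min (γ/2) c₀ * fabPsi δ κ σ y ≤ c₀ * fabPsi δ κ σ y :=
            mul_le_mul_of_nonneg_right (min_le_right _ _) hψpos.le
        _ ≤ c₀ * 1 := mul_le_mul_of_nonneg_left hψ1 hc₀pos.le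
        _ = c₀ := mul_one _
        _ ≤ marginal σ P y := hcompact_lo y hyY
    · have hψge : ψY ≤ fabPsi δ κ σ y := by
        rw [hψY]
        refine fabPsi_anti hδ hκσ ?_
        rw [abs_of_nonneg (by linarith : (0:ℝ) ≤ Y)]
        exact hyY
      calc marginal σ P y ≤ Bf := hcompact_hi y hyY
        _ = (Bf / ψY) * ψY := by field_simp
        _ ≤ (Bf / ψY) * fabPsi δ κ σ y := by
            exact mul_le_mul_of_nonneg_left hψge (by positivity)
        _ ≤ max (2*(γ*(2:ℝ)^δ)) (Bf / ψY) * fabPsi δ κ σ y :=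
            mul_le_mul_of_nonneg_right (le_max_right _ _) hψpos.le

lemma fab_gauss_window (σ : ℝ) (hσ : 0 < σ) (α : ℝ) (hα : α ∈ Ioo (0:ℝ) 1) :
    ∃ ρ : ℝ, 0 < ρ ∧ ∀ θ₀ : ℝ,
      ENNReal.ofReal (1-α) ≤ gaussianReal θ₀ ((σ^2).toNNReal) (Icc (θ₀-ρ) (θ₀+ρ)) ∧
      ENNReal.ofReal α < gaussianReal θ₀ ((σ^2).toNNReal) (Icc (θ₀-ρ) (θ₀+ρ)) := by
  set v := ((σ:ℝ)^2).toNNReal with hv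
  set ν := gaussianReal 0 v with hν
  have hmono : Monotone (fun n : ℕ => Icc (-(n:ℝ)) n) := by
    intro a b hab
    exact Icc_subset_Icc (by simp [neg_le_neg, Nat.cast_le.2 hab]) (by exact_mod_cast hab)
  have huniv : (⋃ n : ℕ, Icc (-(n:ℝ)) n) = univ := by
    ext x
    simp only [mem_iUnion, mem_univ, iff_true]
    obtain ⟨k, hk⟩ := exists_nat_ge |x|
    exact ⟨k, by constructor <;> [linarith [neg_abs_le x]; linarith [le_abs_self x]]⟩
  have htend : Tendsto (fun n : ℕ => ν (Icc (-(n:ℝ)) n)) atTop (𝓝 (ν univ)) := by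
    have := tendsto_measure_iUnion_atTop (μ := ν) hmono
    rwa [huniv] at this
  have hν1 : ν univ = 1 := measure_univ
  rw [hν1] at htend
  have h1 : ∀ᶠ n : ℕ in atTop, ENNReal.ofReal (1-α) < ν (Icc (-(n:ℝ)) n) :=
    htend.eventually (eventually_gt_nhds (by
      rw [← ENNReal.ofReal_one]
      exact ENNReal.ofReal_lt_ofReal_iff_of_nonneg (by linarith [hα.2]) |>.2 (by linarith [hα.1])))
  have h2 : ∀ᶠ n : ℕ in atTop, ENNReal.ofReal α < ν (Icc (-(n:ℝ)) n) :=
    htend.eventually (eventually_gt_nhds (by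
      rw [← ENNReal.ofReal_one]
      exact ENNReal.ofReal_lt_ofReal_iff_of_nonneg (by linarith [hα.1]) |>.2 (by linarith [hα.2])))
  obtain ⟨n, hn1, hn2⟩ := (h1.and h2).exists
  refine ⟨(n:ℝ) + 1, by positivity, ?_⟩
  intro θ₀
  have htrans : gaussianReal θ₀ v (Icc (θ₀-((n:ℝ)+1)) (θ₀+((n:ℝ)+1))) = ν (Icc (-((n:ℝ)+1)) ((n:ℝ)+1)) := by
    have hmap : (gaussianReal 0 v).map (· + θ₀) = gaussianReal θ₀ v := by
      rw [gaussianReal_map_add_const θ₀, zero_add]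
    rw [← hmap, Measure.map_apply (measurable_id'.add_const θ₀) measurableSet_Icc]
    congr 1
    ext x
    simp only [mem_preimage, mem_Icc]
    constructor <;> intro h <;> constructor <;> linarith [h.1, h.2]
  have hsub : Icc (-(n:ℝ)) n ⊆ Icc (-((n:ℝ)+1)) ((n:ℝ)+1) :=
    Icc_subset_Icc (by linarith) (by linarith)
  have hge : ν (Icc (-(n:ℝ)) n) ≤ ν (Icc (-((n:ℝ)+1)) ((n:ℝ)+1)) := measure_mono hsub
  rw [htrans]
  exact ⟨le_trans hn1.le hge, lt_of_lt_of_le hn2 hge⟩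

lemma fab_quad_bound {t a b R : ℝ} (htnn : 0 ≤ t) (ha : 0 ≤ a)
    (hR : R = 1 + a + max b 0) (ht2 : t^2 ≤ b + a*t) : t ≤ R := by
  by_contra hcon
  push_neg at hcon
  have hb1 : b ≤ max b 0 := le_max_left _ _
  have hb2 : (0:ℝ) ≤ max b 0 := le_max_right _ _
  have ht1 : 1 ≤ t := by rw [hR] at hcon; linarith
  nlinarith [mul_lt_mul_of_pos_left (hR ▸ hcon) (lt_of_lt_of_le zero_lt_one ht1),
    mul_le_mul_of_nonneg_left ht1 hb2]

set_option maxHeartbeats 1000000 in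
/-- under the power-law/exponential tail condition
`f(y) ~ γ|y|^{−δ} exp(−κ|y|/σ)` as `y → ±∞`, with the derivative of
`y ↦ f(y)exp(κ|y|/σ)` ultimately monotone, the FAB confidence regions have uniformly
bounded Lebesgue volume. -/
theorem stmt4 (σ : ℝ) (hσ : 0 < σ) (P : Measure ℝ) [IsLocallyFiniteMeasure P]
    (hnd : ¬ ∃ θ₁ : ℝ, P ({θ₁}ᶜ) = 0)
    (hint : ∀ y : ℝ, Integrable (fun θ => gaussPdf σ θ y) P)
    (hpos : ∀ y : ℝ, 0 < marginal σ P y)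
    (γ δ κ : ℝ) (hγ : 0 < γ) (hδ : 0 ≤ δ) (hκ : 0 ≤ κ)
    (htailTop : Tendsto
      (fun y => marginal σ P y / (γ * |y| ^ (-δ) * Real.exp (-(κ / σ) * |y|)))
      atTop (𝓝 1))
    (htailBot : Tendsto
      (fun y => marginal σ P y / (γ * |y| ^ (-δ) * Real.exp (-(κ / σ) * |y|)))
      atBot (𝓝 1))
    (hmono : ∃ M > (0:ℝ), ∃ g' : ℝ → ℝ,
      (∀ y : ℝ, y ≠ 0 →
        HasDerivAt (fun z => marginal σ P z * Real.exp ((κ / σ) * |z|)) (g' y) y) ∧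
      (MonotoneOn g' (Ioi M) ∨ AntitoneOn g' (Ioi M)) ∧
      (MonotoneOn g' (Iio (-M)) ∨ AntitoneOn g' (Iio (-M))))
    (α : ℝ) (hα : α ∈ Ioo (0:ℝ) 1) :
    (⨆ y : ℝ, volume (confRegion σ P α y)) < ⊤ := by
  clear hmono
  have hκσ : 0 ≤ κ/σ := div_nonneg hκ hσ.le
  obtain ⟨c₁, c₂, hc₁, hc₂, hbd⟩ :=
    fab_global_bounds σ hσ P hnd hint hpos γ δ κ hγ hδ hκ htailTop htailBot
  obtain ⟨ρ, hρ, hwin⟩ := fab_gauss_window σ hσ α hα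
  set c₀ : ℝ := Real.log (Real.sqrt (2*Real.pi*σ^2)) with hc₀
  set Λ : ℝ := (1+ρ) ^ δ * Real.exp ((κ/σ)*ρ) with hΛ
  have hΛpos : 0 < Λ := by
    rw [hΛ]
    have : (0:ℝ) < 1 + ρ := by linarith
    positivity
  set C₆ : ℝ := 2*c₂*Λ*Real.exp ((2*ρ)^2/(2*σ^2)) with hC₆
  have hC₆pos : 0 < C₆ := by rw [hC₆]; positivity
  -- upper bound for marginal on the window around θ₀
  have hwinup : ∀ θ₀ y : ℝ, y ∈ Icc (θ₀-ρ) (θ₀+ρ) → marginal σ P y ≤ C₆ * fabPsi δ κ σ θ₀ := by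
    intro θ₀ y hy
    have h2pt := fab_marginal_twoPoint σ hσ P hint hy.1 hy.2
    have hrw : ((θ₀+ρ) - (θ₀-ρ))^2 = (2*ρ)^2 := by ring
    rw [hrw] at h2pt
    have hψ1 : fabPsi δ κ σ (θ₀-ρ) ≤ Λ * fabPsi δ κ σ θ₀ := by
      have := fabPsi_slowVar (δ := δ) (κ := κ) (σ := σ) hδ hκσ
        (x := θ₀-ρ) (x' := θ₀) (t := ρ) (by rw [show θ₀-ρ-θ₀ = -ρ by ring, abs_neg, abs_of_pos hρ])
      rw [hΛ]; exact this
    have hψ2 : fabPsi δ κ σ (θ₀+ρ) ≤ Λ * fabPsi δ κ σ θ₀ := by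
      have := fabPsi_slowVar (δ := δ) (κ := κ) (σ := σ) hδ hκσ
        (x := θ₀+ρ) (x' := θ₀) (t := ρ) (by rw [show θ₀+ρ-θ₀ = ρ by ring, abs_of_pos hρ])
      rw [hΛ]; exact this
    have hm1 := (hbd (θ₀-ρ)).2
    have hm2 := (hbd (θ₀+ρ)).2
    have hexp : (0:ℝ) < Real.exp ((2*ρ)^2/(2*σ^2)) := Real.exp_pos _
    calc marginal σ P y ≤ Real.exp ((2*ρ)^2/(2*σ^2)) * (marginal σ P (θ₀-ρ) + marginal σ P (θ₀+ρ)) := h2pt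
      _ ≤ Real.exp ((2*ρ)^2/(2*σ^2)) * (c₂ * (Λ * fabPsi δ κ σ θ₀) + c₂ * (Λ * fabPsi δ κ σ θ₀)) := by
          refine mul_le_mul_of_nonneg_left ?_ hexp.le
          have hψp1 := fabPsi_pos (δ := δ) (κ := κ) (σ := σ) (θ₀-ρ)
          have hψp2 := fabPsi_pos (δ := δ) (κ := κ) (σ := σ) (θ₀+ρ)
          have e1 : marginal σ P (θ₀-ρ) ≤ c₂ * (Λ * fabPsi δ κ σ θ₀) :=
            le_trans hm1 (mul_le_mul_of_nonneg_left hψ1 hc₂.le)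
          have e2 : marginal σ P (θ₀+ρ) ≤ c₂ * (Λ * fabPsi δ κ σ θ₀) :=
            le_trans hm2 (mul_le_mul_of_nonneg_left hψ2 hc₂.le)
          linarith
      _ = C₆ * fabPsi δ κ σ θ₀ := by rw [hC₆]; ring
  -- lower bound for marginal on the window around θ₀
  have hwinlo : ∀ θ₀ y : ℝ, y ∈ Icc (θ₀-ρ) (θ₀+ρ) → c₁ * fabPsi δ κ σ θ₀ / Λ ≤ marginal σ P y := by
    intro θ₀ y hy
    have hslow : fabPsi δ κ σ θ₀ ≤ Λ * fabPsi δ κ σ y := by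
      have habs : |θ₀ - y| ≤ ρ := by
        rw [abs_le]; constructor <;> [linarith [hy.2]; linarith [hy.1]]
      have := fabPsi_slowVar (δ := δ) (κ := κ) (σ := σ) hδ hκσ habs
      rw [hΛ]; exact this
    have h1 := (hbd y).1
    rw [div_le_iff₀ hΛpos]
    calc c₁ * fabPsi δ κ σ θ₀ ≤ c₁ * (Λ * fabPsi δ κ σ y) := mul_le_mul_of_nonneg_left hslow hc₁.le
      _ = (c₁ * fabPsi δ κ σ y) * Λ := by ring
      _ ≤ marginal σ P y * Λ := mul_le_mul_of_nonneg_right h1 hΛpos.le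
  -- bounds on kAlpha
  set K : ℝ → ℝ := fun θ₀ => Real.log (C₆ * fabPsi δ κ σ θ₀) + c₀ + ρ^2/(2*σ^2) with hK
  set L : ℝ → ℝ := fun θ₀ => Real.log (c₁ * fabPsi δ κ σ θ₀ / Λ) + c₀ with hL
  have hKmem : ∀ θ₀ : ℝ, ENNReal.ofReal (1-α) ≤
      gaussianReal θ₀ ((σ^2).toNNReal) {y | loglr σ P θ₀ y ≤ K θ₀} := by
    intro θ₀
    refine le_trans (hwin θ₀).1 (measure_mono ?_)
    intro y hy
    have hle := hwinup θ₀ y hy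
    have hψp := fabPsi_pos (δ := δ) (κ := κ) (σ := σ) θ₀
    have hfy := hpos y
    have hlog : Real.log (marginal σ P y) ≤ Real.log (C₆ * fabPsi δ κ σ θ₀) :=
      Real.log_le_log hfy hle
    have hsq : (y - θ₀)^2 ≤ ρ^2 := by
      obtain ⟨h1, h2⟩ := hy
      nlinarith
    have hsq2 : (y-θ₀)^2/(2*σ^2) ≤ ρ^2/(2*σ^2) :=
      div_le_div_of_nonneg_right hsq (by positivity)
    show loglr σ P θ₀ y ≤ K θ₀
    rw [fab_loglr_eq σ hσ P θ₀ y, hK]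
    dsimp only
    rw [← hc₀]
    linarith
  have hLlb : ∀ θ₀ : ℝ, ∀ k ∈ {k : ℝ | ENNReal.ofReal (1 - α) ≤
      gaussianReal θ₀ ((σ^2).toNNReal) {y | loglr σ P θ₀ y ≤ k}}, L θ₀ ≤ k := by
    intro θ₀ k hk
    by_contra hcon
    push_neg at hcon
    have hdisj : {y | loglr σ P θ₀ y ≤ k} ⊆ (Icc (θ₀-ρ) (θ₀+ρ))ᶜ := by
      intro y hy
      simp only [mem_compl_iff]
      intro hyIcc
      have hlo := hwinlo θ₀ y hyIcc
      have hψp := fabPsi_pos (δ := δ) (κ := κ) (σ := σ) θ₀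
      have hcpos : 0 < c₁ * fabPsi δ κ σ θ₀ / Λ := by positivity
      have hlog : Real.log (c₁ * fabPsi δ κ σ θ₀ / Λ) ≤ Real.log (marginal σ P y) :=
        Real.log_le_log hcpos hlo
      have hsqnn : 0 ≤ (y-θ₀)^2/(2*σ^2) := by positivity
      have : L θ₀ ≤ loglr σ P θ₀ y := by
        rw [fab_loglr_eq σ hσ P θ₀ y, hL]
        dsimp only
        rw [← hc₀]
        linarith
      have := hy
      simp only [mem_setOf_eq] at this
      linarith
    have hμIcc := (hwin θ₀).2
    have hk' : ENNReal.ofReal (1-α) ≤ 1 - gaussianReal θ₀ ((σ^2).toNNReal) (Icc (θ₀-ρ) (θ₀+ρ)) := by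
      calc ENNReal.ofReal (1-α) ≤ gaussianReal θ₀ ((σ^2).toNNReal) {y | loglr σ P θ₀ y ≤ k} := hk
        _ ≤ gaussianReal θ₀ ((σ^2).toNNReal) ((Icc (θ₀-ρ) (θ₀+ρ))ᶜ) := measure_mono hdisj
        _ = 1 - gaussianReal θ₀ ((σ^2).toNNReal) (Icc (θ₀-ρ) (θ₀+ρ)) :=
            prob_compl_eq_one_sub measurableSet_Icc
    set μI := gaussianReal θ₀ ((σ^2).toNNReal) (Icc (θ₀-ρ) (θ₀+ρ)) with hμI
    have hle1 : μI ≤ 1 := prob_le_one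
    have hsum : ENNReal.ofReal (1-α) + μI ≤ 1 := by
      calc ENNReal.ofReal (1-α) + μI ≤ (1 - μI) + μI := add_le_add hk' le_rfl
        _ = 1 := tsub_add_cancel_of_le hle1
    have hgt : (1:ENNReal) < ENNReal.ofReal (1-α) + μI := by
      calc (1:ENNReal) = ENNReal.ofReal (1-α) + ENNReal.ofReal α := by
            rw [← ENNReal.ofReal_add (by linarith [hα.2]) (by linarith [hα.1])]
            norm_num
        _ < ENNReal.ofReal (1-α) + μI :=
            ENNReal.add_lt_add_left ENNReal.ofReal_ne_top hμIcc
    exact absurd (lt_of_lt_of_le hgt hsum) (lt_irrefl _)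
  have hkAlpha_le : ∀ θ₀ : ℝ, kAlpha σ P α θ₀ ≤ K θ₀ := by
    intro θ₀
    exact csInf_le ⟨L θ₀, fun k hk => hLlb θ₀ k hk⟩ (hKmem θ₀)
  -- the final containment
  set a : ℝ := 2*σ^2*(δ + κ/σ) with ha
  set b : ℝ := ρ^2 + 2*σ^2*(Real.log C₆ - Real.log c₁) with hb
  set R : ℝ := 1 + a + max b 0 with hR
  have haR : 0 ≤ a := by rw [ha]; positivity
  have hR1 : 1 ≤ R := by
    rw [hR]
    have := le_max_right b 0
    linarith
  have hcont : ∀ y : ℝ, confRegion σ P α y ⊆ Icc (y-R) (y+R) := by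
    intro y θ₀ hθ₀
    have hloglr : loglr σ P θ₀ y ≤ K θ₀ := le_trans hθ₀ (hkAlpha_le θ₀)
    set t : ℝ := |y - θ₀| with htdef
    have htnn : 0 ≤ t := abs_nonneg _
    have hψy := fabPsi_pos (δ := δ) (κ := κ) (σ := σ) y
    have hψθ := fabPsi_pos (δ := δ) (κ := κ) (σ := σ) θ₀
    have hslow : fabPsi δ κ σ θ₀ ≤ (1+t) ^ δ * Real.exp ((κ/σ)*t) * fabPsi δ κ σ y :=
      fabPsi_slowVar hδ hκσ (by rw [htdef, abs_sub_comm])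
    have hfy := (hbd y).1
    have hmain : t^2/(2*σ^2) ≤ ρ^2/(2*σ^2) + (Real.log C₆ - Real.log c₁)
        + δ * Real.log (1+t) + (κ/σ)*t := by
      rw [fab_loglr_eq σ hσ P θ₀ y] at hloglr
      rw [hK] at hloglr
      dsimp only at hloglr
      rw [← hc₀] at hloglr
      have h1 : Real.log (c₁ * fabPsi δ κ σ y) ≤ Real.log (marginal σ P y) :=
        Real.log_le_log (by positivity) hfy
      have h2 : Real.log (C₆ * fabPsi δ κ σ θ₀) ≤ Real.log C₆ + Real.log (fabPsi δ κ σ θ₀) := by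
        rw [Real.log_mul hC₆pos.ne' hψθ.ne']
      have h3 : Real.log (fabPsi δ κ σ θ₀) ≤ δ * Real.log (1+t) + (κ/σ)*t + Real.log (fabPsi δ κ σ y) := by
        have h4 : Real.log (fabPsi δ κ σ θ₀) ≤ Real.log ((1+t) ^ δ * Real.exp ((κ/σ)*t) * fabPsi δ κ σ y) :=
          Real.log_le_log hψθ hslow
        have h1t : (0:ℝ) < 1 + t := by linarith
        rw [Real.log_mul (by positivity) hψy.ne', Real.log_mul (by positivity) (Real.exp_ne_zero _),
          Real.log_rpow h1t, Real.log_exp] at h4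
        linarith
      have h5 : Real.log c₁ + Real.log (fabPsi δ κ σ y) = Real.log (c₁ * fabPsi δ κ σ y) := by
        rw [Real.log_mul hc₁.ne' hψy.ne']
      have h6 : (y - θ₀)^2 = t^2 := (sq_abs _).symm
      rw [h6] at hloglr
      linarith
    have hlog1t : Real.log (1+t) ≤ t := by
      have := Real.log_le_sub_one_of_pos (show (0:ℝ) < 1+t by linarith)
      linarith
    have ht2 : t^2 ≤ b + a * t := by
      have hσ2 : (0:ℝ) < 2*σ^2 := by positivity
      have := mul_le_mul_of_nonneg_right hmain hσ2.le
      rw [div_mul_cancel₀ _ hσ2.ne'] at this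
      have hδt : δ * Real.log (1+t) ≤ δ * t := mul_le_mul_of_nonneg_left hlog1t hδ
      rw [hb, ha]
      calc t^2 ≤ (ρ^2/(2*σ^2) + (Real.log C₆ - Real.log c₁) + δ * Real.log (1+t) + (κ/σ)*t) * (2*σ^2) := this
        _ ≤ (ρ^2/(2*σ^2) + (Real.log C₆ - Real.log c₁) + δ * t + (κ/σ)*t) * (2*σ^2) := by nlinarith
        _ = ρ^2/(2*σ^2)*(2*σ^2) + 2*σ^2*(Real.log C₆ - Real.log c₁) + 2*σ^2*(δ + κ/σ) * t := by
            ring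
        _ = ρ^2 + 2*σ^2*(Real.log C₆ - Real.log c₁) + 2*σ^2*(δ + κ/σ) * t := by
            rw [div_mul_cancel₀ _ hσ2.ne']
    have htR : t ≤ R := fab_quad_bound htnn haR hR ht2
    have := abs_le.1 (htdef ▸ htR)
    exact ⟨by linarith [this.1], by linarith [this.2]⟩
  have hvol : ∀ y : ℝ, volume (confRegion σ P α y) ≤ ENNReal.ofReal (2*R) := by
    intro y
    calc volume (confRegion σ P α y) ≤ volume (Icc (y-R) (y+R)) := measure_mono (hcont y)
      _ = ENNReal.ofReal ((y+R) - (y-R)) := Real.volume_Icc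
      _ = ENNReal.ofReal (2*R) := by ring_nf
  exact lt_of_le_of_lt (iSup_le hvol) ENNReal.ofReal_lt_top
end

section
/- Let a, b > 0 and let π(θ) = ∫₀^∞ N(θ; 0, σ²t) f_{τ²}(t) dt be the scale mixture of normals with beta prime mixing density f_{τ²}(t) = t^{b−1}(1+t)^{−(a+b)}/B(a,b), where B is the Beta function. Then the Gaussian marginal likelihood satisfies, for every y ∈ ℝ, f(y) = ∫_ℝ f_θ(y) π(θ) dθ = (B(a,b) √(2πσ²))^{-1} ∫₀¹ exp(−u y²/(2σ²)) u^{a−1/2} (1−u)^{b−1} du, which equals (2πσ²)^{-1/2} · [Γ(a+1/2)Γ(a+b)/(Γ(a)Γ(a+b+1/2))] · ₁F₁(a+1/2, a+b+1/2, −y²/(2σ²)), where ₁F₁(α, β, z) = [Γ(β)/(Γ(β−α)Γ(α))] ∫₀¹ e^{zu} u^{α−1}(1−u)^{β−α−1} du is Kummer's confluent hypergeometric function of the first kind (for β > α > 0). -/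
open MeasureTheory Real Set Filter Topology ProbabilityTheory

/-- Centered Gaussian density with variance `v`: `N(θ; 0, v)`. -/
noncomputable def centeredGaussPdf (v θ : ℝ) : ℝ :=
  (Real.sqrt (2 * Real.pi * v))⁻¹ * Real.exp (-θ ^ 2 / (2 * v))

/-- The Beta function `B(a,b) = Γ(a)Γ(b)/Γ(a+b)`. -/
noncomputable def betaFn (a b : ℝ) : ℝ :=
  Real.Gamma a * Real.Gamma b / Real.Gamma (a + b)

/-- Beta prime density with parameters `a, b`: `t^{b−1}(1+t)^{−(a+b)}/B(a,b)`. -/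
noncomputable def betaPrimePdf (a b t : ℝ) : ℝ :=
  t ^ (b - 1) * (1 + t) ^ (-(a + b)) / betaFn a b

/-- Scale mixture of normals prior `π(θ) = ∫₀^∞ N(θ; 0, σ²t) f_{τ²}(t) dt`. -/
noncomputable def mixPrior (σ : ℝ) (fτ : ℝ → ℝ) (θ : ℝ) : ℝ :=
  ∫ t in Ioi (0:ℝ), centeredGaussPdf (σ ^ 2 * t) θ * fτ t

/-- Marginal likelihood `f(y) = ∫ f_θ(y) π(θ) dθ` under the scale mixture prior. -/
noncomputable def mixMarginal (σ : ℝ) (fτ : ℝ → ℝ) (y : ℝ) : ℝ :=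
  ∫ θ, gaussPdf σ θ y * mixPrior σ fτ θ

/-- Kummer's confluent hypergeometric function `₁F₁(a, b, z)` via its integral
representation (valid for `b > a > 0`). -/
noncomputable def kummerM (a b z : ℝ) : ℝ :=
  Real.Gamma b / (Real.Gamma (b - a) * Real.Gamma a) *
    ∫ u in Ioo (0:ℝ) 1, Real.exp (z * u) * u ^ (a - 1) * (1 - u) ^ (b - a - 1)

/- ### Auxiliary lemmas -/

lemma integrableOn_beta_aux {p q : ℝ} (hp : -1 < p) (hq : -1 < q) :
    IntegrableOn (fun x : ℝ => x ^ p * (1 - x) ^ q) (Ioo (0:ℝ) 1) := by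
  have h := (Complex.betaIntegral_convergent (u := (p+1 : ℂ)) (v := (q+1 : ℂ))
    (by simp; linarith) (by simp; linarith)).norm
  rw [intervalIntegrable_iff] at h
  rw [uIoc_of_le (by norm_num : (0:ℝ) ≤ 1)] at h
  refine (h.mono_set Ioo_subset_Ioc_self).congr_fun ?_ measurableSet_Ioo
  intro x hx
  obtain ⟨hx0, hx1⟩ := hx
  have h1x : (0:ℝ) < 1 - x := by linarith
  simp only [norm_mul]
  rw [show ((x:ℂ)) = ((x:ℝ):ℂ) from rfl]
  rw [Complex.norm_cpow_eq_rpow_re_of_pos hx0]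
  rw [show (1 - (x:ℂ)) = (((1 - x : ℝ)):ℂ) by push_cast; ring]
  rw [Complex.norm_cpow_eq_rpow_re_of_pos h1x]
  norm_num

lemma conv_eq (σ v y : ℝ) (hσ : 0 < σ) (hv : 0 < v) :
    (fun θ => gaussPdf σ θ y * centeredGaussPdf v θ) =
      fun θ => centeredGaussPdf (σ ^ 2 + v) y *
        gaussianPDFReal (v * y / (σ ^ 2 + v))
          (Real.toNNReal (σ ^ 2 * v / (σ ^ 2 + v))) θ := by
  funext θ
  have hs : (0:ℝ) < σ ^ 2 := by positivity
  have hV : (0:ℝ) < σ ^ 2 + v := by positivity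
  have hw : (0:ℝ) < σ ^ 2 * v / (σ ^ 2 + v) := by positivity
  have hpi := Real.pi_pos
  rw [gaussPdf, centeredGaussPdf, centeredGaussPdf, gaussianPDFReal_def, Real.coe_toNNReal _ hw.le]
  push_cast
  have hsqrt : Real.sqrt (2 * π * σ ^ 2) * Real.sqrt (2 * π * v)
      = Real.sqrt (2 * π * (σ ^ 2 + v)) * Real.sqrt (2 * π * (σ ^ 2 * v / (σ ^ 2 + v))) := by
    rw [← Real.sqrt_mul (by positivity), ← Real.sqrt_mul (by positivity)]
    congr 1
    field_simp
  have hexp : Real.exp (-(y - θ) ^ 2 / (2 * σ ^ 2)) * Real.exp (-θ ^ 2 / (2 * v))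
      = Real.exp (-y ^ 2 / (2 * (σ ^ 2 + v))) *
        Real.exp (-(θ - v * y / (σ ^ 2 + v)) ^ 2 / (2 * (σ ^ 2 * v / (σ ^ 2 + v)))) := by
    rw [← Real.exp_add, ← Real.exp_add]
    congr 1
    field_simp
    ring
  calc (Real.sqrt (2 * π * σ ^ 2))⁻¹ * Real.exp (-(y - θ) ^ 2 / (2 * σ ^ 2)) *
        ((Real.sqrt (2 * π * v))⁻¹ * Real.exp (-θ ^ 2 / (2 * v)))
      = (Real.sqrt (2 * π * σ ^ 2) * Real.sqrt (2 * π * v))⁻¹ *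
        (Real.exp (-(y - θ) ^ 2 / (2 * σ ^ 2)) * Real.exp (-θ ^ 2 / (2 * v))) := by
        rw [mul_inv]; ring
    _ = _ := by
        rw [hsqrt, hexp, mul_inv]; ring

lemma conv_integrable (σ v y : ℝ) (hσ : 0 < σ) (hv : 0 < v) :
    Integrable (fun θ => gaussPdf σ θ y * centeredGaussPdf v θ) := by
  rw [conv_eq σ v y hσ hv]
  exact (integrable_gaussianPDFReal _ _).const_mul _

lemma conv_integral (σ v y : ℝ) (hσ : 0 < σ) (hv : 0 < v) :
    ∫ θ, gaussPdf σ θ y * centeredGaussPdf v θ = centeredGaussPdf (σ ^ 2 + v) y := by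
  rw [conv_eq σ v y hσ hv, integral_const_mul,
    integral_gaussianPDFReal_eq_one _
      (by rw [← NNReal.coe_ne_zero, Real.coe_toNNReal _ (by positivity)]; exact (by positivity : (0:ℝ) < σ ^ 2 * v / (σ ^ 2 + v)).ne'),
    mul_one]

lemma img_eq : (fun u : ℝ => u⁻¹ - 1) '' Ioo 0 1 = Ioi 0 := by
  ext t
  constructor
  · rintro ⟨u, ⟨hu0, hu1⟩, rfl⟩
    have : (1:ℝ) < u⁻¹ := one_lt_inv_iff₀.mpr ⟨hu0, hu1⟩
    simpa using this
  · intro ht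
    have ht' : (0:ℝ) < 1 + t := by have := mem_Ioi.mp ht; linarith
    refine ⟨(1 + t)⁻¹, ⟨by positivity, ?_⟩, ?_⟩
    · rw [inv_lt_one_iff₀]
      right; have := mem_Ioi.mp ht; linarith
    · show ((1+t)⁻¹)⁻¹ - 1 = t
      rw [inv_inv]; ring

lemma deriv_aux : ∀ u ∈ Ioo (0:ℝ) 1,
    HasDerivWithinAt (fun u : ℝ => u⁻¹ - 1) (-(u ^ 2)⁻¹) (Ioo 0 1) u :=
  fun u hu => ((hasDerivAt_inv hu.1.ne').sub_const 1).hasDerivWithinAt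

lemma inj_aux : InjOn (fun u : ℝ => u⁻¹ - 1) (Ioo 0 1) :=
  fun u _ v _ h => inv_injective (by dsimp at h; linarith)

lemma point_eq (σ a b y : ℝ) (hσ : 0 < σ) {u : ℝ} (hu : u ∈ Ioo (0:ℝ) 1) :
    |(-(u ^ 2)⁻¹)| * (centeredGaussPdf (σ ^ 2 * (1 + (u⁻¹ - 1))) y * betaPrimePdf a b (u⁻¹ - 1)) =
      (betaFn a b * Real.sqrt (2 * Real.pi * σ ^ 2))⁻¹ *
        (Real.exp (-(u * y ^ 2 / (2 * σ ^ 2))) * u ^ (a - 1 / 2) * (1 - u) ^ (b - 1)) := by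
  obtain ⟨hu0, hu1⟩ := hu
  have h1u : (0:ℝ) < 1 - u := by linarith
  have hpi := Real.pi_pos
  have h2 : 1 + (u⁻¹ - 1) = u⁻¹ := by ring
  rw [centeredGaussPdf, betaPrimePdf, h2]
  have habs : |(-(u ^ 2)⁻¹)| = u ^ (-(2:ℝ)) := by
    rw [abs_neg, abs_inv, abs_of_pos (by positivity), ← Real.rpow_natCast u 2,
      ← Real.rpow_neg hu0.le]
    norm_num
  have hsq : (Real.sqrt (2 * π * (σ ^ 2 * u⁻¹)))⁻¹ =
      (Real.sqrt (2 * π * σ ^ 2))⁻¹ * u ^ ((1:ℝ) / 2) := by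
    rw [show 2 * π * (σ ^ 2 * u⁻¹) = (2 * π * σ ^ 2) * u⁻¹ by ring,
      Real.sqrt_mul (by positivity), Real.sqrt_inv, mul_inv, inv_inv, Real.sqrt_eq_rpow u]
  have hexp : -y ^ 2 / (2 * (σ ^ 2 * u⁻¹)) = -(u * y ^ 2 / (2 * σ ^ 2)) := by
    field_simp
  have hbp : (u⁻¹ - 1) ^ (b - 1) = (1 - u) ^ (b - 1) * u ^ (-(b - 1)) := by
    rw [show u⁻¹ - 1 = (1 - u) * u⁻¹ by field_simp,
      Real.mul_rpow h1u.le (by positivity), Real.inv_rpow hu0.le, ← Real.rpow_neg hu0.le]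
  have hup : (u⁻¹) ^ (-(a + b)) = u ^ (a + b) := by
    rw [Real.inv_rpow hu0.le, ← Real.rpow_neg hu0.le, neg_neg]
  rw [habs, hsq, hexp, hbp, hup]
  have hcomb : u ^ (-(2:ℝ)) * u ^ ((1:ℝ) / 2) * u ^ (-(b - 1)) * u ^ (a + b) =
      u ^ (a - 1 / 2) := by
    rw [← Real.rpow_add hu0, ← Real.rpow_add hu0, ← Real.rpow_add hu0]
    norm_num
    ring_nf
  rw [← hcomb, mul_inv]
  ring

lemma target_integrable (σ a b y : ℝ) (hσ : 0 < σ) (ha : 0 < a) (hb : 0 < b) :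
    IntegrableOn
      (fun u : ℝ => Real.exp (-(u * y ^ 2 / (2 * σ ^ 2))) * u ^ (a - 1 / 2) * (1 - u) ^ (b - 1))
      (Ioo (0:ℝ) 1) := by
  refine Integrable.mono
    (integrableOn_beta_aux (p := a - 1/2) (q := b - 1) (by linarith) (by linarith)) ?_ ?_
  · apply Measurable.aestronglyMeasurable
    exact ((Real.measurable_exp.comp (by fun_prop)).mul (by fun_prop)).mul (by fun_prop)
  · filter_upwards [ae_restrict_mem measurableSet_Ioo] with u hu
    obtain ⟨hu0, hu1⟩ := hu
    have h1u : (0:ℝ) < 1 - u := by linarith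
    have hE : Real.exp (-(u * y ^ 2 / (2 * σ ^ 2))) ≤ 1 := by
      rw [Real.exp_le_one_iff]
      have : (0:ℝ) ≤ u * y ^ 2 / (2 * σ ^ 2) := by positivity
      linarith
    have hE0 : (0:ℝ) < Real.exp (-(u * y ^ 2 / (2 * σ ^ 2))) := Real.exp_pos _
    have hp : (0:ℝ) ≤ u ^ (a - 1/2) := by positivity
    have hq : (0:ℝ) ≤ (1 - u) ^ (b - 1) := by positivity
    rw [Real.norm_eq_abs, Real.norm_eq_abs, abs_of_nonneg (by positivity),
      abs_of_nonneg (by positivity)]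
    nlinarith [mul_nonneg hp hq]

lemma subst_eq (σ a b y : ℝ) (hσ : 0 < σ) :
    ∫ t in Ioi (0:ℝ), centeredGaussPdf (σ ^ 2 * (1 + t)) y * betaPrimePdf a b t =
      (betaFn a b * Real.sqrt (2 * Real.pi * σ ^ 2))⁻¹ *
        ∫ u in Ioo (0:ℝ) 1,
          Real.exp (-(u * y ^ 2 / (2 * σ ^ 2))) * u ^ (a - 1 / 2) * (1 - u) ^ (b - 1) := by
  rw [← img_eq, integral_image_eq_integral_abs_deriv_smul measurableSet_Ioo deriv_aux inj_aux,
    ← integral_const_mul]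
  refine setIntegral_congr_fun measurableSet_Ioo (fun u hu => ?_)
  simpa [smul_eq_mul] using point_eq σ a b y hσ hu

lemma subst_integrable (σ a b y : ℝ) (hσ : 0 < σ) (ha : 0 < a) (hb : 0 < b) :
    IntegrableOn
      (fun t => centeredGaussPdf (σ ^ 2 * (1 + t)) y * betaPrimePdf a b t) (Ioi (0:ℝ)) := by
  rw [← img_eq, integrableOn_image_iff_integrableOn_abs_deriv_smul
    measurableSet_Ioo deriv_aux inj_aux]
  refine IntegrableOn.congr_fun ((target_integrable σ a b y hσ ha hb).const_mul
    ((betaFn a b * Real.sqrt (2 * Real.pi * σ ^ 2))⁻¹)) (fun u hu => ?_) measurableSet_Ioo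
  simpa [smul_eq_mul] using (point_eq σ a b y hσ hu).symm

/-- the Gaussian marginal likelihood under the beta prime scale mixture prior
equals the stated one-dimensional integral, which in turn equals the stated closed form in
terms of Kummer's confluent hypergeometric function. -/
theorem stmt10 (σ : ℝ) (hσ : 0 < σ) (a b : ℝ) (ha : 0 < a) (hb : 0 < b) (y : ℝ) :
    mixMarginal σ (betaPrimePdf a b) y =
      (betaFn a b * Real.sqrt (2 * Real.pi * σ ^ 2))⁻¹ *
        ∫ u in Ioo (0:ℝ) 1,
          Real.exp (-(u * y ^ 2 / (2 * σ ^ 2))) * u ^ (a - 1 / 2) * (1 - u) ^ (b - 1) ∧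
    mixMarginal σ (betaPrimePdf a b) y =
      (Real.sqrt (2 * Real.pi * σ ^ 2))⁻¹ *
        (Real.Gamma (a + 1 / 2) * Real.Gamma (a + b) /
          (Real.Gamma a * Real.Gamma (a + b + 1 / 2))) *
        kummerM (a + 1 / 2) (a + b + 1 / 2) (-(y ^ 2 / (2 * σ ^ 2))) := by
  have hpi := Real.pi_pos
  have hβnn : ∀ t : ℝ, 0 < t → 0 ≤ betaPrimePdf a b t := by
    intro t ht
    have hB : 0 < betaFn a b := by
      rw [betaFn]
      have := Real.Gamma_pos_of_pos ha
      have := Real.Gamma_pos_of_pos hb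
      have := Real.Gamma_pos_of_pos (by linarith : (0:ℝ) < a + b)
      positivity
    rw [betaPrimePdf]
    have h1 : (0:ℝ) ≤ t ^ (b - 1) := Real.rpow_nonneg ht.le _
    have h2 : (0:ℝ) ≤ (1 + t) ^ (-(a + b)) := Real.rpow_nonneg (by linarith) _
    positivity
  -- measurability of the joint function
  have hFmeas : AEStronglyMeasurable
      (Function.uncurry fun t θ =>
        gaussPdf σ θ y * centeredGaussPdf (σ ^ 2 * t) θ * betaPrimePdf a b t)
      ((volume.restrict (Ioi (0:ℝ))).prod volume) := by
    apply Measurable.aestronglyMeasurable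
    unfold Function.uncurry gaussPdf centeredGaussPdf betaPrimePdf
    fun_prop
  -- Fubini integrability
  have hslice : ∀ t : ℝ, 0 < t →
      Integrable (fun θ => gaussPdf σ θ y * centeredGaussPdf (σ ^ 2 * t) θ
        * betaPrimePdf a b t) := by
    intro t ht
    exact (conv_integrable σ (σ ^ 2 * t) y hσ (by positivity)).mul_const _
  have hint : Integrable
      (Function.uncurry fun t θ =>
        gaussPdf σ θ y * centeredGaussPdf (σ ^ 2 * t) θ * betaPrimePdf a b t)
      ((volume.restrict (Ioi (0:ℝ))).prod volume) := by
    rw [integrable_prod_iff hFmeas]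
    constructor
    · rw [ae_restrict_iff' measurableSet_Ioi]
      exact ae_of_all _ fun t ht => hslice t ht
    · refine ((subst_integrable σ a b y hσ ha hb).congr ?_)
      rw [EventuallyEq, ae_restrict_iff' measurableSet_Ioi]
      refine ae_of_all _ fun t ht => ?_
      have ht' : (0:ℝ) < σ ^ 2 * t := by have := mem_Ioi.mp ht; positivity
      have hgpos : ∀ θ, 0 ≤ gaussPdf σ θ y * centeredGaussPdf (σ ^ 2 * t) θ
          * betaPrimePdf a b t := by
        intro θ
        have h1 : 0 < gaussPdf σ θ y := by
          rw [gaussPdf]; positivity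
        have h2 : 0 < centeredGaussPdf (σ ^ 2 * t) θ := by
          rw [centeredGaussPdf]; positivity
        exact mul_nonneg (mul_nonneg h1.le h2.le) (hβnn t (mem_Ioi.mp ht))
      calc centeredGaussPdf (σ ^ 2 * (1 + t)) y * betaPrimePdf a b t
          = (∫ θ, gaussPdf σ θ y * centeredGaussPdf (σ ^ 2 * t) θ) * betaPrimePdf a b t := by
            rw [conv_integral σ (σ ^ 2 * t) y hσ ht',
              show σ ^ 2 + σ ^ 2 * t = σ ^ 2 * (1 + t) by ring]
        _ = ∫ θ, gaussPdf σ θ y * centeredGaussPdf (σ ^ 2 * t) θ * betaPrimePdf a b t := by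
            rw [← integral_mul_const]
        _ = ∫ θ, ‖gaussPdf σ θ y * centeredGaussPdf (σ ^ 2 * t) θ * betaPrimePdf a b t‖ := by
            refine integral_congr_ae (ae_of_all _ fun θ => ?_)
            simpa using (Real.norm_of_nonneg (hgpos θ)).symm
  -- main computation of the marginal
  have hmain : mixMarginal σ (betaPrimePdf a b) y =
      ∫ t in Ioi (0:ℝ), centeredGaussPdf (σ ^ 2 * (1 + t)) y * betaPrimePdf a b t := by
    rw [mixMarginal]
    unfold mixPrior
    calc ∫ θ, gaussPdf σ θ y *
          ∫ t in Ioi (0:ℝ), centeredGaussPdf (σ ^ 2 * t) θ * betaPrimePdf a b t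
        = ∫ θ, ∫ t in Ioi (0:ℝ),
            gaussPdf σ θ y * centeredGaussPdf (σ ^ 2 * t) θ * betaPrimePdf a b t := by
          simp_rw [← integral_const_mul, mul_assoc]
      _ = ∫ t in Ioi (0:ℝ), ∫ θ,
            gaussPdf σ θ y * centeredGaussPdf (σ ^ 2 * t) θ * betaPrimePdf a b t := by
          exact (integral_integral_swap hint).symm
      _ = ∫ t in Ioi (0:ℝ), centeredGaussPdf (σ ^ 2 * (1 + t)) y * betaPrimePdf a b t := by
          refine setIntegral_congr_fun measurableSet_Ioi (fun t ht => ?_)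
          have ht' : (0:ℝ) < σ ^ 2 * t := by have := mem_Ioi.mp ht; positivity
          rw [integral_mul_const, conv_integral σ (σ ^ 2 * t) y hσ ht',
            show σ ^ 2 + σ ^ 2 * t = σ ^ 2 * (1 + t) by ring]
  refine ⟨hmain.trans (subst_eq σ a b y hσ), ?_⟩
  rw [hmain.trans (subst_eq σ a b y hσ), kummerM]
  have e1 : a + b + 1 / 2 - (a + 1 / 2) = b := by ring
  have e2 : a + 1 / 2 - 1 = a - 1 / 2 := by ring
  rw [e1, e2]
  have e4 : ∀ u : ℝ, -(y ^ 2 / (2 * σ ^ 2)) * u = -(u * y ^ 2 / (2 * σ ^ 2)) := fun u => by ring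
  simp_rw [e4]
  have hGa := Real.Gamma_pos_of_pos ha
  have hGb := Real.Gamma_pos_of_pos hb
  have hGab := Real.Gamma_pos_of_pos (by linarith : (0:ℝ) < a + b)
  have hGa2 := Real.Gamma_pos_of_pos (by linarith : (0:ℝ) < a + 1 / 2)
  have hGab2 := Real.Gamma_pos_of_pos (by linarith : (0:ℝ) < a + b + 1 / 2)
  have hsq : (0:ℝ) < Real.sqrt (2 * Real.pi * σ ^ 2) := Real.sqrt_pos.mpr (by positivity)
  rw [betaFn]
  field_simp
  ring_nf
  congr 1
  ext u
  ring_nf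
end

section
/- Let κ > 0 and let π(θ) = (κ/(2σ)) exp(−κ|θ|/σ) be the Laplace prior with scale σ/κ. Then the Gaussian marginal likelihood satisfies, for every y ∈ ℝ, f(y) = ∫_ℝ f_θ(y) π(θ) dθ = (κ/(2σ)) e^{κ²/2} [e^{−κy/σ} Φ((y − σκ)/σ) + e^{κy/σ} Φ(−(y + σκ)/σ)], where Φ is the standard normal CDF; consequently f(y) ~ (κ/(2σ)) e^{κ²/2} e^{−κ|y|/σ} as y → ±∞. -/
open MeasureTheory Real Set Filter Topology

/-- Laplace prior density `π(θ) = (κ/(2σ)) exp(−κ|θ|/σ)` with scale `σ/κ`. -/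
noncomputable def laplacePdf (σ κ θ : ℝ) : ℝ :=
  κ / (2 * σ) * Real.exp (-(κ * |θ|) / σ)

/-- Marginal likelihood `f(y) = ∫ f_θ(y) π(θ) dθ` under the Laplace prior. -/
noncomputable def laplaceMarginal (σ κ y : ℝ) : ℝ :=
  ∫ θ, gaussPdf σ θ y * laplacePdf σ κ θ

/-- Standard normal CDF `Φ`. -/
noncomputable def stdNormCDF (x : ℝ) : ℝ :=
  ∫ t in Iic x, Real.exp (-t ^ 2 / 2) / Real.sqrt (2 * Real.pi)


lemma integrable_gauss {σ : ℝ} (hσ : 0 < σ) (m : ℝ) :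
    Integrable (fun θ : ℝ => Real.exp (-(θ - m) ^ 2 / (2 * σ ^ 2))) := by
  have h : ∀ θ : ℝ, -(θ - m) ^ 2 / (2 * σ ^ 2) = -((2 * σ ^ 2)⁻¹) * (θ - m) ^ 2 := by
    intro θ; field_simp
  simp_rw [h]
  exact (integrable_exp_neg_mul_sq (by positivity)).comp_sub_right m

lemma integrable_std : Integrable (fun t : ℝ => Real.exp (-t ^ 2 / 2)) := by
  have := integrable_gauss (σ := 1) one_pos 0
  simpa using this

lemma exp_integral_std : ∫ t : ℝ, Real.exp (-t ^ 2 / 2) = Real.sqrt (2 * Real.pi) := by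
  have h : ∀ t : ℝ, -t ^ 2 / 2 = -(2⁻¹ : ℝ) * t ^ 2 := fun t => by ring
  simp_rw [h, integral_gaussian]
  rw [show Real.pi / 2⁻¹ = 2 * Real.pi by ring]

lemma gauss_Iic {σ : ℝ} (hσ : 0 < σ) (m c : ℝ) :
    ∫ θ in Iic c, Real.exp (-(θ - m) ^ 2 / (2 * σ ^ 2)) =
      σ * ∫ t in Iic ((c - m) / σ), Real.exp (-t ^ 2 / 2) := by
  have hpt : ∀ x : ℝ, Real.exp (-(x - m) ^ 2 / (2 * σ ^ 2)) =
      Real.exp (-(x / σ - m / σ) ^ 2 / 2) := by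
    intro x; rw [← sub_div]; congr 1; rw [div_pow]; field_simp
  have h1 : Tendsto (fun a => ∫ x in a..c, Real.exp (-(x - m) ^ 2 / (2 * σ ^ 2)))
      atBot (𝓝 (∫ θ in Iic c, Real.exp (-(θ - m) ^ 2 / (2 * σ ^ 2)))) :=
    intervalIntegral_tendsto_integral_Iic c (integrable_gauss hσ m).integrableOn tendsto_id
  have h2 : Tendsto (fun a : ℝ => σ * ∫ t in (a - m) / σ..(c - m) / σ, Real.exp (-t ^ 2 / 2))
      atBot (𝓝 (σ * ∫ t in Iic ((c - m) / σ), Real.exp (-t ^ 2 / 2))) := by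
    refine Tendsto.const_mul σ ?_
    refine intervalIntegral_tendsto_integral_Iic _ integrable_std.integrableOn ?_
    exact ((tendsto_atBot_add_const_right atBot (-m) tendsto_id).atBot_div_const hσ).congr
      (fun a => by simp [sub_eq_add_neg])
  refine tendsto_nhds_unique (h1.congr fun a => ?_) h2
  simp_rw [hpt]
  rw [intervalIntegral.integral_comp_div_sub (f := fun t => Real.exp (-t ^ 2 / 2)) hσ.ne' (m / σ),
    smul_eq_mul]
  simp [sub_div]

lemma gauss_Ioi {σ : ℝ} (hσ : 0 < σ) (m : ℝ) :
    ∫ θ in Ioi (0:ℝ), Real.exp (-(θ - m) ^ 2 / (2 * σ ^ 2)) =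
      σ * ∫ t in Iic (m / σ), Real.exp (-t ^ 2 / 2) := by
  have : ∫ θ in Ioi (0:ℝ), Real.exp (-(θ - m) ^ 2 / (2 * σ ^ 2)) =
      ∫ θ in Ioi (0:ℝ), (fun x => Real.exp (-(x - (-m)) ^ 2 / (2 * σ ^ 2))) (-θ) := by
    refine setIntegral_congr_fun measurableSet_Ioi (fun x _ => ?_)
    simp only; congr 2; ring
  rw [this, integral_comp_neg_Ioi 0 (fun x => Real.exp (-(x - (-m)) ^ 2 / (2 * σ ^ 2))),
    neg_zero, gauss_Iic hσ (-m) 0]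
  norm_num

lemma stdNormCDF_eq (x : ℝ) :
    stdNormCDF x = (Real.sqrt (2 * Real.pi))⁻¹ * ∫ t in Iic x, Real.exp (-t ^ 2 / 2) := by
  unfold stdNormCDF
  rw [integral_div, div_eq_inv_mul]

lemma stdNormCDF_nonneg (x : ℝ) : 0 ≤ stdNormCDF x := by
  rw [stdNormCDF_eq]
  positivity

lemma tendsto_Iic_integral_std :
    Tendsto (fun x : ℝ => ∫ t in Iic x, Real.exp (-t ^ 2 / 2)) atTop
      (𝓝 (Real.sqrt (2 * Real.pi))) := by
  have h1 := intervalIntegral_tendsto_integral_Ioi (0:ℝ) integrable_std.integrableOn tendsto_id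
  have h2 : Tendsto (fun x : ℝ => (∫ t in Iic (0:ℝ), Real.exp (-t ^ 2 / 2)) +
      ∫ t in (0:ℝ)..x, Real.exp (-t ^ 2 / 2)) atTop
      (𝓝 ((∫ t in Iic (0:ℝ), Real.exp (-t ^ 2 / 2)) +
        ∫ t in Ioi (0:ℝ), Real.exp (-t ^ 2 / 2))) := tendsto_const_nhds.add h1
  have h3 : ∀ x : ℝ, (∫ t in Iic (0:ℝ), Real.exp (-t ^ 2 / 2)) +
      ∫ t in (0:ℝ)..x, Real.exp (-t ^ 2 / 2) = ∫ t in Iic x, Real.exp (-t ^ 2 / 2) := by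
    intro x
    rw [← intervalIntegral.integral_Iic_sub_Iic integrable_std.integrableOn
      integrable_std.integrableOn]
    ring
  have h4 : (∫ t in Iic (0:ℝ), Real.exp (-t ^ 2 / 2)) +
      ∫ t in Ioi (0:ℝ), Real.exp (-t ^ 2 / 2) = Real.sqrt (2 * Real.pi) := by
    rw [intervalIntegral.integral_Iic_add_Ioi integrable_std.integrableOn integrable_std.integrableOn,
      exp_integral_std]
  rw [← h4]
  exact h2.congr h3

lemma stdNormCDF_tendsto_one : Tendsto stdNormCDF atTop (𝓝 1) := by
  have h := tendsto_Iic_integral_std.const_mul (Real.sqrt (2 * Real.pi))⁻¹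
  have : (Real.sqrt (2 * Real.pi))⁻¹ * Real.sqrt (2 * Real.pi) = 1 := by
    rw [inv_mul_cancel₀]
    positivity
  rw [this] at h
  exact h.congr fun x => (stdNormCDF_eq x).symm

lemma integrable_quarter : Integrable (fun t : ℝ => Real.exp (-t ^ 2 / 4)) := by
  have h : ∀ t : ℝ, -t ^ 2 / 4 = -(4⁻¹ : ℝ) * t ^ 2 := fun t => by ring
  simp_rw [h]
  exact integrable_exp_neg_mul_sq (by norm_num)

lemma stdNormCDF_tail {x : ℝ} (hx : 0 ≤ x) :
    stdNormCDF (-x) ≤ Real.sqrt 2 * Real.exp (-x ^ 2 / 4) := by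
  rw [stdNormCDF_eq]
  have hb : ∫ t in Iic (-x), Real.exp (-t ^ 2 / 2) ≤
      ∫ t in Iic (-x), Real.exp (-x ^ 2 / 4) * Real.exp (-t ^ 2 / 4) := by
    refine setIntegral_mono_on integrable_std.integrableOn
      ((integrable_quarter.const_mul _).integrableOn) measurableSet_Iic ?_
    intro t ht
    rw [← Real.exp_add, Real.exp_le_exp]
    simp only [mem_Iic] at ht
    nlinarith [sq_nonneg (t + x), sq_nonneg (t - x)]
  have hc : ∫ t in Iic (-x), Real.exp (-x ^ 2 / 4) * Real.exp (-t ^ 2 / 4) ≤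
      Real.exp (-x ^ 2 / 4) * ∫ t : ℝ, Real.exp (-t ^ 2 / 4) := by
    rw [MeasureTheory.integral_const_mul]
    refine mul_le_mul_of_nonneg_left ?_ (Real.exp_pos _).le
    exact setIntegral_le_integral integrable_quarter
      (Filter.Eventually.of_forall fun t => (Real.exp_pos _).le)
  have hint : ∫ t : ℝ, Real.exp (-t ^ 2 / 4) = Real.sqrt (4 * Real.pi) := by
    have h : ∀ t : ℝ, -t ^ 2 / 4 = -(4⁻¹ : ℝ) * t ^ 2 := fun t => by ring
    simp_rw [h, integral_gaussian]
    rw [show Real.pi / 4⁻¹ = 4 * Real.pi by ring]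
  calc (Real.sqrt (2 * Real.pi))⁻¹ * ∫ t in Iic (-x), Real.exp (-t ^ 2 / 2)
      ≤ (Real.sqrt (2 * Real.pi))⁻¹ * (Real.exp (-x ^ 2 / 4) * Real.sqrt (4 * Real.pi)) := by
        refine mul_le_mul_of_nonneg_left (hb.trans (hint ▸ hc)) (by positivity)
    _ = Real.sqrt 2 * Real.exp (-x ^ 2 / 4) := by
        rw [show (4:ℝ) * Real.pi = 2 * (2 * Real.pi) by ring, Real.sqrt_mul (by norm_num)]
        have hpos : (0:ℝ) < Real.sqrt (2 * Real.pi) := by positivity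
        field_simp
        ring_nf; rw [Real.sq_sqrt (by norm_num), show π * 4 = 2 ^ 2 * π by ring, Real.sqrt_mul (by norm_num), Real.sqrt_sq (by norm_num)]

lemma Iic_std_eq (s : ℝ) :
    ∫ t in Iic s, Real.exp (-t ^ 2 / 2) = Real.sqrt (2 * Real.pi) * stdNormCDF s := by
  rw [stdNormCDF_eq]
  rw [← mul_assoc, mul_inv_cancel₀ (by positivity), one_mul]

lemma hform_aux (σ κ : ℝ) (hσ : 0 < σ) (hκ : 0 < κ) (y : ℝ) :
    laplaceMarginal σ κ y =
      κ / (2 * σ) * Real.exp (κ ^ 2 / 2) *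
        (Real.exp (-(κ * y) / σ) * stdNormCDF ((y - σ * κ) / σ) +
          Real.exp (κ * y / σ) * stdNormCDF (-(y + σ * κ) / σ)) := by
  have hA : Real.sqrt (2 * Real.pi * σ ^ 2) = Real.sqrt (2 * Real.pi) * σ := by
    rw [Real.sqrt_mul (by positivity), Real.sqrt_sq hσ.le]
  have eNeg : ∀ θ ∈ Iic (0:ℝ), gaussPdf σ θ y * laplacePdf σ κ θ =
      ((Real.sqrt (2 * Real.pi * σ ^ 2))⁻¹ * (κ / (2 * σ)) *
        Real.exp (κ ^ 2 / 2 + κ * y / σ)) * Real.exp (-(θ - (y + σ * κ)) ^ 2 / (2 * σ ^ 2)) := by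
    intro θ hθ
    simp only [mem_Iic] at hθ
    have harg : -(y - θ) ^ 2 / (2 * σ ^ 2) + -(κ * -θ) / σ =
        (κ ^ 2 / 2 + κ * y / σ) + -(θ - (y + σ * κ)) ^ 2 / (2 * σ ^ 2) := by
      field_simp; ring
    calc gaussPdf σ θ y * laplacePdf σ κ θ
        = (Real.sqrt (2 * Real.pi * σ ^ 2))⁻¹ * (κ / (2 * σ)) *
          Real.exp (-(y - θ) ^ 2 / (2 * σ ^ 2) + -(κ * -θ) / σ) := by
          rw [gaussPdf, laplacePdf, abs_of_nonpos hθ, Real.exp_add]; ring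
      _ = _ := by rw [harg, Real.exp_add]; ring
  have ePos : ∀ θ ∈ Ioi (0:ℝ), gaussPdf σ θ y * laplacePdf σ κ θ =
      ((Real.sqrt (2 * Real.pi * σ ^ 2))⁻¹ * (κ / (2 * σ)) *
        Real.exp (κ ^ 2 / 2 + -(κ * y) / σ)) * Real.exp (-(θ - (y - σ * κ)) ^ 2 / (2 * σ ^ 2)) := by
    intro θ hθ
    simp only [mem_Ioi] at hθ
    have harg : -(y - θ) ^ 2 / (2 * σ ^ 2) + -(κ * θ) / σ =
        (κ ^ 2 / 2 + -(κ * y) / σ) + -(θ - (y - σ * κ)) ^ 2 / (2 * σ ^ 2) := by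
      field_simp; ring
    calc gaussPdf σ θ y * laplacePdf σ κ θ
        = (Real.sqrt (2 * Real.pi * σ ^ 2))⁻¹ * (κ / (2 * σ)) *
          Real.exp (-(y - θ) ^ 2 / (2 * σ ^ 2) + -(κ * θ) / σ) := by
          rw [gaussPdf, laplacePdf, abs_of_pos hθ, Real.exp_add]; ring
      _ = _ := by rw [harg, Real.exp_add]; ring
  have hIntIic : IntegrableOn (fun θ => gaussPdf σ θ y * laplacePdf σ κ θ) (Iic 0) :=
    ((((integrable_gauss hσ (y + σ * κ)).const_mul _).integrableOn).congr_fun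
      (fun θ hθ => (eNeg θ hθ).symm) measurableSet_Iic)
  have hIntIoi : IntegrableOn (fun θ => gaussPdf σ θ y * laplacePdf σ κ θ) (Ioi 0) :=
    ((((integrable_gauss hσ (y - σ * κ)).const_mul _).integrableOn).congr_fun
      (fun θ hθ => (ePos θ hθ).symm) measurableSet_Ioi)
  rw [laplaceMarginal, ← intervalIntegral.integral_Iic_add_Ioi hIntIic hIntIoi]
  rw [setIntegral_congr_fun measurableSet_Iic eNeg, setIntegral_congr_fun measurableSet_Ioi ePos]
  rw [MeasureTheory.integral_const_mul, MeasureTheory.integral_const_mul,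
    gauss_Iic hσ (y + σ * κ) 0, gauss_Ioi hσ (y - σ * κ)]
  rw [Iic_std_eq, Iic_std_eq]
  rw [show (0 - (y + σ * κ)) / σ = -(y + σ * κ) / σ by ring]
  rw [hA, Real.exp_add, Real.exp_add]
  have h2π : Real.sqrt (2 * Real.pi) ≠ 0 := by positivity
  field_simp
  ring

lemma hratio_aux (σ κ : ℝ) (hσ : 0 < σ) (hκ : 0 < κ) {y : ℝ} (hy : 0 ≤ y) :
    laplaceMarginal σ κ y /
        (κ / (2 * σ) * Real.exp (κ ^ 2 / 2) * Real.exp (-(κ * |y|) / σ)) =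
      stdNormCDF ((y - σ * κ) / σ) +
        Real.exp (2 * κ * y / σ) * stdNormCDF (-(y + σ * κ) / σ) := by
  rw [hform_aux σ κ hσ hκ y, abs_of_nonneg hy]
  rw [div_eq_iff (by positivity)]
  have hE : Real.exp (2 * κ * y / σ) * Real.exp (-(κ * y) / σ) = Real.exp (κ * y / σ) := by
    rw [← Real.exp_add]; congr 1; ring
  rw [← hE]
  ring

lemma htop_aux (σ κ : ℝ) (hσ : 0 < σ) (hκ : 0 < κ) :
    Tendsto (fun y => laplaceMarginal σ κ y /
        (κ / (2 * σ) * Real.exp (κ ^ 2 / 2) * Real.exp (-(κ * |y|) / σ)))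
      atTop (𝓝 1) := by
  have h1 : Tendsto (fun y : ℝ => stdNormCDF ((y - σ * κ) / σ)) atTop (𝓝 1) := by
    refine stdNormCDF_tendsto_one.comp ?_
    refine ((tendsto_atTop_add_const_right atTop (-(σ * κ)) tendsto_id).atTop_div_const hσ).congr
      (fun y => by simp [sub_eq_add_neg])
  have h2 : Tendsto (fun y : ℝ => Real.exp (2 * κ * y / σ) * stdNormCDF (-(y + σ * κ) / σ))
      atTop (𝓝 0) := by
    have hbound : ∀ᶠ y : ℝ in atTop,
        Real.exp (2 * κ * y / σ) * stdNormCDF (-(y + σ * κ) / σ) ≤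
          Real.sqrt 2 * Real.exp (2 * κ * y / σ - ((y + σ * κ) / σ) ^ 2 / 4) := by
      filter_upwards [eventually_ge_atTop (0:ℝ)] with y hy
      have hx : (0:ℝ) ≤ (y + σ * κ) / σ := by positivity
      have := stdNormCDF_tail hx
      rw [show -((y + σ * κ) / σ) = -(y + σ * κ) / σ by ring] at this
      calc Real.exp (2 * κ * y / σ) * stdNormCDF (-(y + σ * κ) / σ)
          ≤ Real.exp (2 * κ * y / σ) * (Real.sqrt 2 * Real.exp (-((y + σ * κ) / σ) ^ 2 / 4)) :=
            mul_le_mul_of_nonneg_left this (Real.exp_pos _).le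
        _ = Real.sqrt 2 * Real.exp (2 * κ * y / σ - ((y + σ * κ) / σ) ^ 2 / 4) := by
            rw [show 2 * κ * y / σ - ((y + σ * κ) / σ) ^ 2 / 4 =
              2 * κ * y / σ + -((y + σ * κ) / σ) ^ 2 / 4 by ring, Real.exp_add]
            ring
    have hEtend : Tendsto (fun y : ℝ => 2 * κ * y / σ - ((y + σ * κ) / σ) ^ 2 / 4) atTop atBot := by
      have hlin : Tendsto (fun y : ℝ => 3 * κ / (2 * σ) - y / (4 * σ ^ 2)) atTop atBot := by
        have := (tendsto_id.atTop_div_const (show (0:ℝ) < 4 * σ ^ 2 by positivity))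
        exact tendsto_atBot_add_const_left atTop (3 * κ / (2 * σ))
          (tendsto_neg_atTop_atBot.comp this)
      have hprod : Tendsto (fun y : ℝ => y * (3 * κ / (2 * σ) - y / (4 * σ ^ 2))) atTop atBot :=
        Tendsto.atTop_mul_atBot₀ tendsto_id hlin
      have := tendsto_atBot_add_const_right atTop (-(κ ^ 2 / 4)) hprod
      refine this.congr (fun y => ?_)
      field_simp
      ring
    have hup : Tendsto (fun y : ℝ =>
        Real.sqrt 2 * Real.exp (2 * κ * y / σ - ((y + σ * κ) / σ) ^ 2 / 4)) atTop (𝓝 0) := by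
      have := (Real.tendsto_exp_atBot.comp hEtend).const_mul (Real.sqrt 2)
      simpa using this
    refine squeeze_zero' ?_ hbound hup
    filter_upwards with y
    exact mul_nonneg (Real.exp_pos _).le (stdNormCDF_nonneg _)
  have := h1.add h2
  rw [add_zero] at this
  refine this.congr' ?_
  filter_upwards [eventually_ge_atTop (0:ℝ)] with y hy
  exact (hratio_aux σ κ hσ hκ hy).symm

lemma hbot_aux (σ κ : ℝ) (hσ : 0 < σ) (hκ : 0 < κ) :
    Tendsto (fun y => laplaceMarginal σ κ y /
        (κ / (2 * σ) * Real.exp (κ ^ 2 / 2) * Real.exp (-(κ * |y|) / σ)))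
      atBot (𝓝 1) := by
  have hsym : ∀ y : ℝ, laplaceMarginal σ κ (-y) = laplaceMarginal σ κ y := by
    intro y
    rw [hform_aux σ κ hσ hκ, hform_aux σ κ hσ hκ]
    rw [show (-y - σ * κ) / σ = -(y + σ * κ) / σ by ring,
      show -(-y + σ * κ) / σ = (y - σ * κ) / σ by ring,
      show -(κ * -y) / σ = κ * y / σ by ring,
      show κ * -y / σ = -(κ * y) / σ by ring]
    ring
  have := (htop_aux σ κ hσ hκ).comp tendsto_neg_atBot_atTop
  refine this.congr (fun y => ?_)
  simp only [Function.comp_apply, hsym, abs_neg]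

/-- the Gaussian marginal likelihood under the Laplace prior has the stated
closed form, and consequently `f(y) ~ (κ/(2σ)) e^{κ²/2} e^{−κ|y|/σ}` as `y → ±∞`. -/
theorem stmt14 (σ κ : ℝ) (hσ : 0 < σ) (hκ : 0 < κ) :
    (∀ y : ℝ, laplaceMarginal σ κ y =
      κ / (2 * σ) * Real.exp (κ ^ 2 / 2) *
        (Real.exp (-(κ * y) / σ) * stdNormCDF ((y - σ * κ) / σ) +
          Real.exp (κ * y / σ) * stdNormCDF (-(y + σ * κ) / σ))) ∧
    Tendsto (fun y => laplaceMarginal σ κ y /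
        (κ / (2 * σ) * Real.exp (κ ^ 2 / 2) * Real.exp (-(κ * |y|) / σ)))
      atTop (𝓝 1) ∧
    Tendsto (fun y => laplaceMarginal σ κ y /
        (κ / (2 * σ) * Real.exp (κ ^ 2 / 2) * Real.exp (-(κ * |y|) / σ)))
      atBot (𝓝 1) := by
  exact ⟨hform_aux σ κ hσ hκ, htop_aux σ κ hσ hκ, hbot_aux σ κ hσ hκ⟩
end

section
/- Let κ > 0 and let π(θ) = (κ/(2σ)) exp(−κ|θ|/σ) be the Laplace prior. Then the posterior mean under the Gaussian likelihood satisfies, for every y ∈ ℝ, θ̂(y) = ξ(y)(y + σκ) + (1 − ξ(y))(y − σκ), where ξ(y) = (1 + exp(−2κy/σ) · Φ((y − σκ)/σ)/Φ(−(y + σκ)/σ))^{-1} and Φ is the standard normal CDF. -/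
open MeasureTheory Real Set Filter Topology

/-- Posterior mean `θ̂(y) = ∫ θ f_θ(y) π(θ) dθ / f(y)` under the Laplace prior. -/
noncomputable def laplacePostMean (σ κ y : ℝ) : ℝ :=
  (∫ θ, θ * (gaussPdf σ θ y * laplacePdf σ κ θ)) / laplaceMarginal σ κ y

/-- The mixing weight `ξ(y)` in the Laplace posterior mean. -/
noncomputable def laplaceXi (σ κ y : ℝ) : ℝ :=
  (1 + Real.exp (-(2 * κ * y) / σ) *
      (stdNormCDF ((y - σ * κ) / σ) / stdNormCDF (-(y + σ * κ) / σ)))⁻¹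

lemma stdNormCDF_pos (x : ℝ) : 0 < stdNormCDF x := by
  have hb : (0:ℝ) < 1/2 := by norm_num
  have hint : Integrable (fun t : ℝ => Real.exp (-t ^ 2 / 2) / Real.sqrt (2 * Real.pi)) := by
    have h := (integrable_exp_neg_mul_sq hb).div_const (Real.sqrt (2 * Real.pi))
    exact h.congr (Eventually.of_forall fun t => by norm_num; ring_nf)
  rw [stdNormCDF]
  rw [setIntegral_pos_iff_support_of_nonneg_ae]
  · have hsupp : (Function.support fun t : ℝ => Real.exp (-t ^ 2 / 2) / Real.sqrt (2 * Real.pi))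
        = Set.univ := by
      ext t; simp [Function.mem_support, div_eq_zero_iff, Real.exp_ne_zero,
        (Real.sqrt_pos.2 Real.two_pi_pos).ne', Real.pi_ne_zero, Real.sqrt_ne_zero',
        Real.pi_pos]
    rw [hsupp, Set.univ_inter]
    simp [Real.volume_Iic]
  · exact Eventually.of_forall fun t => by positivity
  · exact hint.integrableOn

lemma integral_comp_add_right_Ioi (f : ℝ → ℝ) (c d : ℝ) :
    ∫ x in Ioi c, f (x + d) = ∫ x in Ioi (c + d), f x := by
  have A : MeasurableEmbedding (fun x : ℝ => x + d) :=
    (Homeomorph.addRight d).isClosedEmbedding.measurableEmbedding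
  have h := MeasurableEmbedding.setIntegral_map (μ := volume) A f (Ioi (c + d))
  rw [map_add_right_eq_self volume d] at h
  have hpre : (fun x : ℝ => x + d) ⁻¹' Ioi (c + d) = Ioi c := by
    ext x; simp only [Set.mem_preimage, Set.mem_Ioi]; constructor <;> intro hx <;> linarith
  rw [h, hpre]

lemma intGauss {σ : ℝ} (hσ : 0 < σ) (μ : ℝ) :
    Integrable (fun θ : ℝ => Real.exp (-(θ - μ) ^ 2 / (2 * σ ^ 2))) := by
  have hb : (0:ℝ) < 1 / (2 * σ ^ 2) := by positivity
  have h := (integrable_exp_neg_mul_sq hb).comp_sub_right μ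
  exact h.congr (Eventually.of_forall fun θ => by simp only; congr 1; ring)

lemma intMulGauss {σ : ℝ} (hσ : 0 < σ) (μ : ℝ) :
    Integrable (fun θ : ℝ => θ * Real.exp (-(θ - μ) ^ 2 / (2 * σ ^ 2))) := by
  have hb : (0:ℝ) < 1 / (2 * σ ^ 2) := by positivity
  have h1 := (integrable_mul_exp_neg_mul_sq hb).comp_sub_right μ
  have h2 := (intGauss hσ μ).const_mul μ
  have h := h1.add h2
  exact h.congr (Eventually.of_forall fun θ => by
    simp only [Pi.add_apply]
    have : Real.exp (-(1 / (2 * σ ^ 2)) * (θ - μ) ^ 2)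
        = Real.exp (-(θ - μ) ^ 2 / (2 * σ ^ 2)) := by congr 1; ring
    rw [this]; ring)

lemma intSubMulGauss {σ : ℝ} (hσ : 0 < σ) (μ : ℝ) :
    Integrable (fun θ : ℝ => (θ - μ) * Real.exp (-(θ - μ) ^ 2 / (2 * σ ^ 2))) := by
  have hb : (0:ℝ) < 1 / (2 * σ ^ 2) := by positivity
  have h1 := (integrable_mul_exp_neg_mul_sq hb).comp_sub_right μ
  exact h1.congr (Eventually.of_forall fun θ => by simp only; congr 2; ring)

lemma gaussIoi {σ : ℝ} (hσ : 0 < σ) (μ : ℝ) :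
    ∫ θ in Ioi (0:ℝ), Real.exp (-(θ - μ) ^ 2 / (2 * σ ^ 2))
      = σ * Real.sqrt (2 * Real.pi) * stdNormCDF (μ / σ) := by
  have h1 : ∫ θ in Ioi (0:ℝ), Real.exp (-(θ - μ) ^ 2 / (2 * σ ^ 2))
      = ∫ x in Ioi (-μ), Real.exp (-x ^ 2 / (2 * σ ^ 2)) := by
    have h := integral_comp_add_right_Ioi (fun x => Real.exp (-x ^ 2 / (2 * σ ^ 2))) 0 (-μ)
    simp only [← sub_eq_add_neg, zero_sub] at h
    exact h
  have h2 : ∫ x in Ioi (-μ), Real.exp (-x ^ 2 / (2 * σ ^ 2))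
      = σ * ∫ x in Ioi (-μ / σ), Real.exp (-x ^ 2 / 2) := by
    have h := integral_comp_mul_left_Ioi (fun x => Real.exp (-x ^ 2 / (2 * σ ^ 2))) (-μ / σ) hσ
    rw [mul_div_cancel₀ _ hσ.ne'] at h
    have he : ∀ x : ℝ, Real.exp (-(σ * x) ^ 2 / (2 * σ ^ 2)) = Real.exp (-x ^ 2 / 2) := by
      intro x; congr 1; field_simp
    simp only [he] at h
    rw [h, smul_eq_mul, ← mul_assoc, mul_inv_cancel₀ hσ.ne', one_mul]
  have h3 : ∫ x in Ioi (-μ / σ), Real.exp (-x ^ 2 / 2)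
      = Real.sqrt (2 * Real.pi) * stdNormCDF (μ / σ) := by
    have h := integral_comp_neg_Iic (μ / σ) (fun t => Real.exp (-t ^ 2 / 2))
    simp only [neg_sq] at h
    rw [stdNormCDF, integral_div, neg_div σ μ, ← h]
    have hs : Real.sqrt (2 * Real.pi) ≠ 0 := (Real.sqrt_pos.2 Real.two_pi_pos).ne'
    field_simp
  rw [h1, h2, h3]; ring

lemma ftcGauss {σ : ℝ} (hσ : 0 < σ) (μ : ℝ) :
    ∫ θ in Ioi (0:ℝ), (θ - μ) * Real.exp (-(θ - μ) ^ 2 / (2 * σ ^ 2))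
      = σ ^ 2 * Real.exp (-μ ^ 2 / (2 * σ ^ 2)) := by
  set F : ℝ → ℝ := fun θ => -σ ^ 2 * Real.exp (-(θ - μ) ^ 2 / (2 * σ ^ 2)) with hF
  have hd : ∀ x : ℝ, HasDerivAt F ((x - μ) * Real.exp (-(x - μ) ^ 2 / (2 * σ ^ 2))) x := by
    intro x
    have h0 : HasDerivAt (fun θ : ℝ => θ - μ) 1 x := (hasDerivAt_id x).sub_const μ
    have h1 : HasDerivAt (fun θ : ℝ => (θ - μ) ^ 2) (2 * (x - μ) ^ 1 * 1) x := h0.pow 2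
    have h2 : HasDerivAt (fun θ : ℝ => -(θ - μ) ^ 2 / (2 * σ ^ 2))
        (-(2 * (x - μ) ^ 1 * 1) / (2 * σ ^ 2)) x := h1.neg.div_const _
    have h3 := (h2.exp).const_mul (-σ ^ 2)
    refine h3.congr_deriv ?_
    have hσ2 : σ ^ 2 ≠ 0 := by positivity
    field_simp
  have hlim : Tendsto F atTop (𝓝 0) := by
    have h1 : Tendsto (fun θ : ℝ => -(θ - μ) ^ 2 / (2 * σ ^ 2)) atTop atBot := by
      apply Tendsto.atBot_div_const (by positivity)
      apply tendsto_neg_atTop_atBot.comp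
      exact (tendsto_pow_atTop (two_ne_zero)).comp (tendsto_atTop_add_const_right _ (-μ)
        tendsto_id)
    have h2 := (Real.tendsto_exp_atBot).comp h1
    have h3 := h2.const_mul (-σ ^ 2)
    rw [mul_zero] at h3
    exact h3.congr (fun x => by simp [hF, Function.comp])
  have key := integral_Ioi_of_hasDerivAt_of_tendsto
    (f := F) (f' := fun θ => (θ - μ) * Real.exp (-(θ - μ) ^ 2 / (2 * σ ^ 2))) (a := 0) (m := 0)
    (hd 0).continuousAt.continuousWithinAt (fun x _ => hd x)
    ((intSubMulGauss hσ μ).integrableOn) hlim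
  rw [key, hF]
  simp only [zero_sub, neg_sq]
  ring

lemma momIoi {σ : ℝ} (hσ : 0 < σ) (μ : ℝ) :
    ∫ θ in Ioi (0:ℝ), θ * Real.exp (-(θ - μ) ^ 2 / (2 * σ ^ 2))
      = μ * (σ * Real.sqrt (2 * Real.pi) * stdNormCDF (μ / σ))
        + σ ^ 2 * Real.exp (-μ ^ 2 / (2 * σ ^ 2)) := by
  have hsplit : ∀ θ : ℝ, θ * Real.exp (-(θ - μ) ^ 2 / (2 * σ ^ 2))
      = (θ - μ) * Real.exp (-(θ - μ) ^ 2 / (2 * σ ^ 2))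
        + μ * Real.exp (-(θ - μ) ^ 2 / (2 * σ ^ 2)) := fun θ => by ring
  simp only [hsplit]
  rw [integral_add ((intSubMulGauss hσ μ).integrableOn) (((intGauss hσ μ).const_mul μ).integrableOn),
    ftcGauss hσ μ, integral_const_mul, gaussIoi hσ μ]
  ring

lemma gaussIic {σ : ℝ} (hσ : 0 < σ) (μ : ℝ) :
    ∫ θ in Iic (0:ℝ), Real.exp (-(θ - μ) ^ 2 / (2 * σ ^ 2))
      = σ * Real.sqrt (2 * Real.pi) * stdNormCDF (-μ / σ) := by
  have h := integral_comp_neg_Ioi 0 (fun θ => Real.exp (-(θ - μ) ^ 2 / (2 * σ ^ 2)))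
  rw [neg_zero] at h
  rw [← h]
  have he : ∀ x : ℝ, Real.exp (-(-x - μ) ^ 2 / (2 * σ ^ 2))
      = Real.exp (-(x - -μ) ^ 2 / (2 * σ ^ 2)) := fun x => by congr 2; ring
  simp only [he]
  rw [gaussIoi hσ (-μ), neg_div]

lemma momIic {σ : ℝ} (hσ : 0 < σ) (μ : ℝ) :
    ∫ θ in Iic (0:ℝ), θ * Real.exp (-(θ - μ) ^ 2 / (2 * σ ^ 2))
      = μ * (σ * Real.sqrt (2 * Real.pi) * stdNormCDF (-μ / σ))
        - σ ^ 2 * Real.exp (-μ ^ 2 / (2 * σ ^ 2)) := by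
  have h := integral_comp_neg_Ioi 0 (fun θ => θ * Real.exp (-(θ - μ) ^ 2 / (2 * σ ^ 2)))
  rw [neg_zero] at h
  rw [← h]
  have he : ∀ x : ℝ, -x * Real.exp (-(-x - μ) ^ 2 / (2 * σ ^ 2))
      = -(x * Real.exp (-(x - -μ) ^ 2 / (2 * σ ^ 2))) := fun x => by
    rw [neg_mul]; congr 3; ring
  simp only [he]
  rw [integral_neg, momIoi hσ (-μ), neg_div]
  ring_nf

lemma sqrt2pisq {σ : ℝ} (hσ : 0 < σ) :
    Real.sqrt (2 * Real.pi * σ ^ 2) = σ * Real.sqrt (2 * Real.pi) := by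
  rw [Real.sqrt_mul (by positivity) (σ ^ 2), Real.sqrt_sq hσ.le, mul_comm]

lemma eqOnIoi (σ κ y : ℝ) (hσ : 0 < σ) : ∀ θ ∈ Ioi (0:ℝ),
    gaussPdf σ θ y * laplacePdf σ κ θ
      = (κ / (2 * σ) * (σ * Real.sqrt (2 * Real.pi))⁻¹ * Real.exp (κ ^ 2 / 2 - κ * y / σ))
          * Real.exp (-(θ - (y - σ * κ)) ^ 2 / (2 * σ ^ 2)) := by
  intro θ hθ
  rw [gaussPdf, laplacePdf, abs_of_pos hθ, sqrt2pisq hσ]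
  have hexp : Real.exp (-(y - θ) ^ 2 / (2 * σ ^ 2)) * Real.exp (-(κ * θ) / σ)
      = Real.exp (κ ^ 2 / 2 - κ * y / σ) * Real.exp (-(θ - (y - σ * κ)) ^ 2 / (2 * σ ^ 2)) := by
    rw [← Real.exp_add, ← Real.exp_add]
    congr 1
    field_simp
    ring
  calc (σ * Real.sqrt (2 * Real.pi))⁻¹ * Real.exp (-(y - θ) ^ 2 / (2 * σ ^ 2))
        * (κ / (2 * σ) * Real.exp (-(κ * θ) / σ))
      = (σ * Real.sqrt (2 * Real.pi))⁻¹ * (κ / (2 * σ))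
          * (Real.exp (-(y - θ) ^ 2 / (2 * σ ^ 2)) * Real.exp (-(κ * θ) / σ)) := by ring
    _ = (σ * Real.sqrt (2 * Real.pi))⁻¹ * (κ / (2 * σ))
          * (Real.exp (κ ^ 2 / 2 - κ * y / σ)
            * Real.exp (-(θ - (y - σ * κ)) ^ 2 / (2 * σ ^ 2))) := by rw [hexp]
    _ = _ := by ring

lemma eqOnIic (σ κ y : ℝ) (hσ : 0 < σ) : ∀ θ ∈ Iic (0:ℝ),
    gaussPdf σ θ y * laplacePdf σ κ θ
      = (κ / (2 * σ) * (σ * Real.sqrt (2 * Real.pi))⁻¹ * Real.exp (κ ^ 2 / 2 + κ * y / σ))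
          * Real.exp (-(θ - (y + σ * κ)) ^ 2 / (2 * σ ^ 2)) := by
  intro θ hθ
  rw [gaussPdf, laplacePdf, abs_of_nonpos hθ, sqrt2pisq hσ]
  have hexp : Real.exp (-(y - θ) ^ 2 / (2 * σ ^ 2)) * Real.exp (-(κ * -θ) / σ)
      = Real.exp (κ ^ 2 / 2 + κ * y / σ) * Real.exp (-(θ - (y + σ * κ)) ^ 2 / (2 * σ ^ 2)) := by
    rw [← Real.exp_add, ← Real.exp_add]
    congr 1
    field_simp
    ring
  calc (σ * Real.sqrt (2 * Real.pi))⁻¹ * Real.exp (-(y - θ) ^ 2 / (2 * σ ^ 2))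
        * (κ / (2 * σ) * Real.exp (-(κ * -θ) / σ))
      = (σ * Real.sqrt (2 * Real.pi))⁻¹ * (κ / (2 * σ))
          * (Real.exp (-(y - θ) ^ 2 / (2 * σ ^ 2)) * Real.exp (-(κ * -θ) / σ)) := by ring
    _ = (σ * Real.sqrt (2 * Real.pi))⁻¹ * (κ / (2 * σ))
          * (Real.exp (κ ^ 2 / 2 + κ * y / σ)
            * Real.exp (-(θ - (y + σ * κ)) ^ 2 / (2 * σ ^ 2))) := by rw [hexp]
    _ = _ := by ring

/-- under the Laplace prior, the posterior mean equals
`ξ(y)(y + σκ) + (1 − ξ(y))(y − σκ)` for every `y`. -/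
theorem stmt15 (σ κ : ℝ) (hσ : 0 < σ) (hκ : 0 < κ) (y : ℝ) :
    laplacePostMean σ κ y =
      laplaceXi σ κ y * (y + σ * κ) + (1 - laplaceXi σ κ y) * (y - σ * κ) := by
  have hs : (0:ℝ) < Real.sqrt (2 * Real.pi) := Real.sqrt_pos.2 Real.two_pi_pos
  set s : ℝ := Real.sqrt (2 * Real.pi) with hsdef
  set P : ℝ := stdNormCDF ((y - σ * κ) / σ) with hPdef
  set Q : ℝ := stdNormCDF (-(y + σ * κ) / σ) with hQdef
  set E1 : ℝ := Real.exp (κ ^ 2 / 2 - κ * y / σ) with hE1def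
  set E2 : ℝ := Real.exp (κ ^ 2 / 2 + κ * y / σ) with hE2def
  have hP : 0 < P := stdNormCDF_pos _
  have hQ : 0 < Q := stdNormCDF_pos _
  have hE1 : 0 < E1 := Real.exp_pos _
  have hE2 : 0 < E2 := Real.exp_pos _
  set A : ℝ := κ / (2 * σ) * E1 * P with hAdef
  set B : ℝ := κ / (2 * σ) * E2 * Q with hBdef
  have hA : 0 < A := by positivity
  have hB : 0 < B := by positivity
  -- integrability on the two half lines
  have hIoi : IntegrableOn (fun θ => gaussPdf σ θ y * laplacePdf σ κ θ) (Ioi 0) := by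
    refine (((intGauss hσ (y - σ * κ)).const_mul
      (κ / (2 * σ) * (σ * s)⁻¹ * E1)).integrableOn).congr_fun ?_ measurableSet_Ioi
    exact fun θ hθ => (eqOnIoi σ κ y hσ θ hθ).symm
  have hIic : IntegrableOn (fun θ => gaussPdf σ θ y * laplacePdf σ κ θ) (Iic 0) := by
    refine (((intGauss hσ (y + σ * κ)).const_mul
      (κ / (2 * σ) * (σ * s)⁻¹ * E2)).integrableOn).congr_fun ?_ measurableSet_Iic
    exact fun θ hθ => (eqOnIic σ κ y hσ θ hθ).symm
  have hMIoi : IntegrableOn (fun θ => θ * (gaussPdf σ θ y * laplacePdf σ κ θ)) (Ioi 0) := by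
    refine (((intMulGauss hσ (y - σ * κ)).const_mul
      (κ / (2 * σ) * (σ * s)⁻¹ * E1)).integrableOn).congr_fun ?_ measurableSet_Ioi
    intro θ hθ
    simp only
    rw [eqOnIoi σ κ y hσ θ hθ]
    ring
  have hMIic : IntegrableOn (fun θ => θ * (gaussPdf σ θ y * laplacePdf σ κ θ)) (Iic 0) := by
    refine (((intMulGauss hσ (y + σ * κ)).const_mul
      (κ / (2 * σ) * (σ * s)⁻¹ * E2)).integrableOn).congr_fun ?_ measurableSet_Iic
    intro θ hθ
    simp only
    rw [eqOnIic σ κ y hσ θ hθ]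
    ring
  -- the marginal
  have hMar : laplaceMarginal σ κ y = A + B := by
    rw [laplaceMarginal, ← intervalIntegral.integral_Iic_add_Ioi hIic hIoi,
      setIntegral_congr_fun measurableSet_Iic (eqOnIic σ κ y hσ),
      setIntegral_congr_fun measurableSet_Ioi (eqOnIoi σ κ y hσ),
      integral_const_mul, integral_const_mul, gaussIic hσ (y + σ * κ), gaussIoi hσ (y - σ * κ)]
    simp only [← hsdef, ← hE1def, ← hE2def, ← hPdef, ← hQdef]
    rw [hAdef, hBdef]
    have hσs : σ * s ≠ 0 := by positivity
    field_simp
    ring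
  -- the numerator
  have hNum : (∫ θ, θ * (gaussPdf σ θ y * laplacePdf σ κ θ))
      = (y - σ * κ) * A + (y + σ * κ) * B := by
    have hIicEq : ∀ θ ∈ Iic (0:ℝ), θ * (gaussPdf σ θ y * laplacePdf σ κ θ)
        = (κ / (2 * σ) * (σ * s)⁻¹ * E2)
            * (θ * Real.exp (-(θ - (y + σ * κ)) ^ 2 / (2 * σ ^ 2))) := by
      intro θ hθ; rw [eqOnIic σ κ y hσ θ hθ]; ring
    have hIoiEq : ∀ θ ∈ Ioi (0:ℝ), θ * (gaussPdf σ θ y * laplacePdf σ κ θ)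
        = (κ / (2 * σ) * (σ * s)⁻¹ * E1)
            * (θ * Real.exp (-(θ - (y - σ * κ)) ^ 2 / (2 * σ ^ 2))) := by
      intro θ hθ; rw [eqOnIoi σ κ y hσ θ hθ]; ring
    rw [← intervalIntegral.integral_Iic_add_Ioi hMIic hMIoi,
      setIntegral_congr_fun measurableSet_Iic hIicEq,
      setIntegral_congr_fun measurableSet_Ioi hIoiEq,
      integral_const_mul, integral_const_mul, momIic hσ (y + σ * κ), momIoi hσ (y - σ * κ)]
    simp only [← hsdef, ← hE1def, ← hE2def, ← hPdef, ← hQdef]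
    have hG : E1 * Real.exp (-(y - σ * κ) ^ 2 / (2 * σ ^ 2))
        = E2 * Real.exp (-(y + σ * κ) ^ 2 / (2 * σ ^ 2)) := by
      rw [hE1def, hE2def, ← Real.exp_add, ← Real.exp_add]
      congr 1
      field_simp
      ring
    rw [hAdef, hBdef]
    have hσs : σ * s ≠ 0 := by positivity
    field_simp
    have e1 : Real.exp (-((y - κ * σ) ^ 2 / (2 * σ ^ 2))) = Real.exp (-(y - σ * κ) ^ 2 / (2 * σ ^ 2)) := by
      congr 1; ring
    have e2 : Real.exp (-((y + κ * σ) ^ 2 / (2 * σ ^ 2))) = Real.exp (-(y + σ * κ) ^ 2 / (2 * σ ^ 2)) := by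
      congr 1; ring
    linear_combination σ * hG - E2 * σ * e2 + σ * E1 * e1
  -- the weight
  have hXi : laplaceXi σ κ y = B / (A + B) := by
    rw [laplaceXi, ← hPdef, ← hQdef]
    have hEE : E1 = Real.exp (-(2 * κ * y) / σ) * E2 := by
      rw [hE1def, hE2def, ← Real.exp_add]
      congr 1
      field_simp
      ring
    have hratio : Real.exp (-(2 * κ * y) / σ) * (P / Q) = A / B := by
      rw [hAdef, hBdef, hEE]
      field_simp
    rw [hratio]
    have h1 : 1 + A / B = (A + B) / B := by field_simp; ring
    rw [h1, inv_div]
  rw [laplacePostMean, hNum, hMar, hXi]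
  have hAB : A + B ≠ 0 := by positivity
  field_simp
  ring
end

section
/- Let ℓ₁, ℓ₂ : ℝ → ℝ be bounded functions such that lim_{z→∞} ℓ₁(z) = c₁ and lim_{z→∞} ℓ₂(z) = c₂ with c₂ > −c₁. For y ∈ ℝ define C(y) = {θ = y − δ : −ℓ₁(y − δ) ≤ δ ≤ ℓ₂(y − δ)}. Then the translated sets C(y) − y converge to the interval [−c₂, c₁] as y → ∞, in the sense that for every ε ∈ (0, (c₁+c₂)/2) there exists y₀ such that for all y > y₀, [−c₂ + ε, c₁ − ε] ⊆ C(y) − y ⊆ [−c₂ − ε, c₁ + ε]; in particular d_H(C(y) − y, [−c₂, c₁]) → 0, where d_H is the Hausdorff distance. -/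
open Set Filter Topology

/-- The set `C(y) = {θ = y − δ : −ℓ₁(y−δ) ≤ δ ≤ ℓ₂(y−δ)}`. -/
def limSet (l₁ l₂ : ℝ → ℝ) (y : ℝ) : Set ℝ :=
  {θ : ℝ | ∃ δ : ℝ, θ = y - δ ∧ -l₁ (y - δ) ≤ δ ∧ δ ≤ l₂ (y - δ)}

/-- if `ℓ₁, ℓ₂` are bounded with `ℓ₁(z) → c₁`, `ℓ₂(z) → c₂` as `z → ∞` and
`c₂ > −c₁`, then the translated sets `C(y) − y` converge to `[−c₂, c₁]` as `y → ∞`: for every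
`ε ∈ (0, (c₁+c₂)/2)` eventually `[−c₂+ε, c₁−ε] ⊆ C(y) − y ⊆ [−c₂−ε, c₁+ε]`; in particular the
Hausdorff distance `d_H(C(y) − y, [−c₂, c₁])` tends to `0`. -/
theorem stmt19 (l₁ l₂ : ℝ → ℝ) (c₁ c₂ : ℝ)
    (hb₁ : ∃ M : ℝ, ∀ z : ℝ, |l₁ z| ≤ M) (hb₂ : ∃ M : ℝ, ∀ z : ℝ, |l₂ z| ≤ M)
    (hl₁ : Tendsto l₁ atTop (𝓝 c₁)) (hl₂ : Tendsto l₂ atTop (𝓝 c₂))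
    (hc : c₂ > -c₁) :
    (∀ ε ∈ Ioo (0:ℝ) ((c₁ + c₂) / 2), ∃ y₀ : ℝ, ∀ y > y₀,
      Icc (-c₂ + ε) (c₁ - ε) ⊆ (fun t => t - y) '' limSet l₁ l₂ y ∧
      (fun t => t - y) '' limSet l₁ l₂ y ⊆ Icc (-c₂ - ε) (c₁ + ε)) ∧
    Tendsto (fun y => Metric.hausdorffDist ((fun t => t - y) '' limSet l₁ l₂ y)
        (Icc (-c₂) c₁)) atTop (𝓝 0) := by
  obtain ⟨M₁, hM₁⟩ := hb₁
  obtain ⟨M₂, hM₂⟩ := hb₂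
  have hM₁0 : 0 ≤ M₁ := (abs_nonneg _).trans (hM₁ 0)
  have hM₂0 : 0 ≤ M₂ := (abs_nonneg _).trans (hM₂ 0)
  have hsum : 0 < c₁ + c₂ := by linarith
  have himg : ∀ y : ℝ, (fun t => t - y) '' limSet l₁ l₂ y
      = {x : ℝ | -l₂ (y + x) ≤ x ∧ x ≤ l₁ (y + x)} := by
    intro y
    ext x
    constructor
    · rintro ⟨t, ⟨δ, rfl, h1, h2⟩, rfl⟩
      have he : y + (y - δ - y) = y - δ := by ring
      simp only [mem_setOf_eq, he]
      constructor <;> linarith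
    · rintro ⟨h1, h2⟩
      refine ⟨y + x, ⟨-x, by ring, ?_, ?_⟩, by ring⟩
      · have he : y - -x = y + x := by ring
        rw [he]; linarith
      · have he : y - -x = y + x := by ring
        rw [he]; linarith
  have key : ∀ ε ∈ Ioo (0:ℝ) ((c₁ + c₂) / 2), ∃ y₀ : ℝ, ∀ y > y₀,
      Icc (-c₂ + ε) (c₁ - ε) ⊆ (fun t => t - y) '' limSet l₁ l₂ y ∧
      (fun t => t - y) '' limSet l₁ l₂ y ⊆ Icc (-c₂ - ε) (c₁ + ε) := by
    rintro ε ⟨hε, hε'⟩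
    obtain ⟨Z₁, hZ₁⟩ := (Metric.tendsto_atTop.mp hl₁) ε hε
    obtain ⟨Z₂, hZ₂⟩ := (Metric.tendsto_atTop.mp hl₂) ε hε
    refine ⟨max Z₁ Z₂ + (M₁ + M₂ + |c₁| + |c₂| + 1), fun y hy => ?_⟩
    have hZ₁' := le_max_left Z₁ Z₂
    have hZ₂' := le_max_right Z₁ Z₂
    constructor
    · intro x hx
      rw [himg y]
      have hc₂ : -c₂ ≥ -|c₂| := neg_le_neg (le_abs_self c₂)
      have hz : y + x ≥ max Z₁ Z₂ := by
        have := hx.1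
        have := abs_nonneg c₁
        linarith
      have h1 := hZ₁ (y + x) (le_trans hZ₁' hz)
      have h2 := hZ₂ (y + x) (le_trans hZ₂' hz)
      rw [Real.dist_eq, abs_lt] at h1 h2
      exact ⟨by linarith [hx.1, h2.1], by linarith [hx.2, h1.1]⟩
    · intro x hx
      rw [himg y] at hx
      obtain ⟨h1, h2⟩ := hx
      have hb1 := abs_le.mp (hM₁ (y + x))
      have hb2 := abs_le.mp (hM₂ (y + x))
      have hz : y + x ≥ max Z₁ Z₂ := by
        have := abs_nonneg c₁
        have := abs_nonneg c₂
        linarith [h1, hb2.2]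
      have h1' := hZ₁ (y + x) (le_trans hZ₁' hz)
      have h2' := hZ₂ (y + x) (le_trans hZ₂' hz)
      rw [Real.dist_eq, abs_lt] at h1' h2'
      exact ⟨by linarith, by linarith⟩
  refine ⟨key, ?_⟩
  rw [Metric.tendsto_atTop]
  intro ε hε
  set ε' : ℝ := min (ε / 2) ((c₁ + c₂) / 4) with hε'def
  have hε'pos : 0 < ε' := lt_min (by linarith) (by linarith)
  have hε'le : ε' ≤ ε / 2 := min_le_left _ _
  have hε'le2 : ε' ≤ (c₁ + c₂) / 4 := min_le_right _ _
  obtain ⟨y₀, hy₀⟩ := key ε' ⟨hε'pos, lt_of_le_of_lt hε'le2 (by linarith)⟩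
  refine ⟨y₀ + 1, fun y hy => ?_⟩
  obtain ⟨hsub, hsup⟩ := hy₀ y (by linarith)
  have hd : Metric.hausdorffDist ((fun t => t - y) '' limSet l₁ l₂ y)
      (Icc (-c₂) c₁) ≤ ε' := by
    apply Metric.hausdorffDist_le_of_mem_dist hε'pos.le
    · intro x hx
      obtain ⟨hx1, hx2⟩ := hsup hx
      refine ⟨max (-c₂) (min c₁ x), ⟨le_max_left _ _,
        max_le (by linarith) (min_le_left _ _)⟩, ?_⟩
      rw [Real.dist_eq, abs_le]
      have hmin : x - ε' ≤ min c₁ x := le_min (by linarith) (by linarith)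
      have hmax : max (-c₂) (min c₁ x) ≤ x + ε' :=
        max_le (by linarith) (le_trans (min_le_right _ _) (by linarith))
      have : max (-c₂) (min c₁ x) ≥ x - ε' := le_trans hmin (le_max_right _ _)
      constructor <;> linarith
    · intro u hu
      obtain ⟨hu1, hu2⟩ := hu
      refine ⟨max (-c₂ + ε') (min (c₁ - ε') u), hsub ⟨le_max_left _ _,
        max_le (by linarith) (min_le_left _ _)⟩, ?_⟩
      rw [Real.dist_eq, abs_le]
      have hmin : u - ε' ≤ min (c₁ - ε') u := le_min (by linarith) (by linarith)
      have hmax : max (-c₂ + ε') (min (c₁ - ε') u) ≤ u + ε' :=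
        max_le (by linarith) (le_trans (min_le_right _ _) (by linarith))
      have : max (-c₂ + ε') (min (c₁ - ε') u) ≥ u - ε' := le_trans hmin (le_max_right _ _)
      constructor <;> linarith
  have hnn : 0 ≤ Metric.hausdorffDist ((fun t => t - y) '' limSet l₁ l₂ y)
      (Icc (-c₂) c₁) := Metric.hausdorffDist_nonneg
  rw [Real.dist_eq, sub_zero, abs_of_nonneg hnn]
  linarith
end
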